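/- arXiv:2202.04588 — 9 statements merged into one kernel-verified Lean document; each statement's English description precedes it below -/
import Mathlib

section
/- Let G be a finite abelian group of order v and let 𝓑 be a set of k-element subsets of G, with 2 ≤ k ≤ v, such that every pair of distinct elements of G lies in exactly one member of 𝓑 and every member of 𝓑 sums to zero in G. Then the sum of all elements of G is zero, and every prime dividing v also divides k (i.e., rad(v) divides k). -/
/-!
Fix a point `x`. The blocks through `x`, each with `x` removed, partition `G \ {x}`. Counting
gives `r (k - 1) = v - 1`, where `r` is the number of blocks through `x`, and summing (each block
sums to zero, so `B \ {x}` sums to `-x`) gives `∑ G - x = -r x`. At `x = 0` this says `∑ G = 0`;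
then `r x = x`, so for `x` of prime order `p ∣ v` we get `p ∣ r - 1`, and
`k = v - (r - 1)(k - 1) ≡ 0 (mod p)`.
-/

open Finset

section LinearSpace

variable {α : Type*} [DecidableEq α]

def blocksThrough (𝓑 : Finset (Finset α)) (x : α) : Finset (Finset α) :=
  {B ∈ 𝓑 | x ∈ B}

@[simp]
lemma mem_blocksThrough {𝓑 : Finset (Finset α)} {x : α} {B : Finset α} :
    B ∈ blocksThrough 𝓑 x ↔ B ∈ 𝓑 ∧ x ∈ B :=
  mem_filter

variable {𝓑 : Finset (Finset α)}

lemma pairwiseDisjoint_erase_blocksThrough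
    (hpair : ∀ x y : α, x ≠ y → ∃! B, B ∈ 𝓑 ∧ x ∈ B ∧ y ∈ B) (x : α) :
    (blocksThrough 𝓑 x : Set (Finset α)).PairwiseDisjoint (·.erase x) := by
  intro B hB B' hB' hne
  rw [mem_coe, mem_blocksThrough] at hB hB'
  refine disjoint_left.2 fun y hy hy' => hne ?_
  rw [mem_erase] at hy hy'
  obtain ⟨C, -, huniq⟩ := hpair x y (Ne.symm hy.1)
  exact (huniq B ⟨hB.1, hB.2, hy.2⟩).trans (huniq B' ⟨hB'.1, hB'.2, hy'.2⟩).symm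

lemma biUnion_erase_blocksThrough [Fintype α]
    (hpair : ∀ x y : α, x ≠ y → ∃ B, B ∈ 𝓑 ∧ x ∈ B ∧ y ∈ B) (x : α) :
    (blocksThrough 𝓑 x).biUnion (·.erase x) = univ.erase x := by
  ext y
  simp only [mem_biUnion, mem_blocksThrough, mem_erase, mem_univ, and_true]
  constructor
  · rintro ⟨B, -, hy, -⟩
    exact hy
  · intro hy
    obtain ⟨B, hB, hxB, hyB⟩ := hpair x y (Ne.symm hy)
    exact ⟨B, ⟨hB, hxB⟩, hy, hyB⟩

theorem sum_erase_univ_eq_sum_blocksThrough [Fintype α] {M : Type*} [AddCommMonoid M]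
    (hpair : ∀ x y : α, x ≠ y → ∃! B, B ∈ 𝓑 ∧ x ∈ B ∧ y ∈ B) (f : α → M) (x : α) :
    ∑ y ∈ univ.erase x, f y = ∑ B ∈ blocksThrough 𝓑 x, ∑ y ∈ B.erase x, f y := by
  rw [← biUnion_erase_blocksThrough (fun x y h => (hpair x y h).exists) x,
    sum_biUnion (pairwiseDisjoint_erase_blocksThrough hpair x)]

theorem card_blocksThrough_mul [Fintype α] {k : ℕ} (hcard : ∀ B ∈ 𝓑, #B = k)
    (hpair : ∀ x y : α, x ≠ y → ∃! B, B ∈ 𝓑 ∧ x ∈ B ∧ y ∈ B) (x : α) :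
    (#(blocksThrough 𝓑 x) : ℤ) * (k - 1) = Fintype.card α - 1 := by
  have hcount := sum_erase_univ_eq_sum_blocksThrough hpair (fun _ => (1 : ℤ)) x
  simp only [sum_const, nsmul_one] at hcount
  rw [cast_card_erase_of_mem (mem_univ x), card_univ] at hcount
  rw [hcount, ← nsmul_eq_mul, ← sum_const]
  refine sum_congr rfl fun B hB => ?_
  rw [mem_blocksThrough] at hB
  rw [cast_card_erase_of_mem hB.2, hcard B hB.1]

end LinearSpace

theorem sum_univ_sub_eq_neg_card_blocksThrough_nsmul {G : Type*} [AddCommGroup G] [Fintype G]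
    [DecidableEq G] {𝓑 : Finset (Finset G)}
    (hpair : ∀ x y : G, x ≠ y → ∃! B, B ∈ 𝓑 ∧ x ∈ B ∧ y ∈ B)
    (hzs : ∀ B ∈ 𝓑, ∑ x ∈ B, x = 0) (x : G) :
    ∑ g : G, g - x = -(#(blocksThrough 𝓑 x) • x) := by
  rw [← sum_erase_eq_sub (mem_univ x), sum_erase_univ_eq_sum_blocksThrough hpair (fun y => y) x,
    ← smul_neg, ← sum_const]
  refine sum_congr rfl fun B hB => ?_
  rw [mem_blocksThrough] at hB
  rw [sum_erase_eq_sub hB.2, hzs B hB.1, zero_sub]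

theorem stmt_3_general (G : Type*) [AddCommGroup G] [Fintype G] (v k : ℕ)
    (hv : Fintype.card G = v)
    (𝓑 : Finset (Finset G))
    (hcard : ∀ B ∈ 𝓑, B.card = k)
    (hpair : ∀ x y : G, x ≠ y → ∃! B, B ∈ 𝓑 ∧ x ∈ B ∧ y ∈ B)
    (hzs : ∀ B ∈ 𝓑, ∑ x ∈ B, x = 0) :
    (∑ g : G, g = 0) ∧ ∀ p : ℕ, p.Prime → p ∣ v → p ∣ k := by
  classical
  have hsum := sum_univ_sub_eq_neg_card_blocksThrough_nsmul hpair hzs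
  have hS : ∑ g : G, g = 0 := by simpa using hsum 0
  refine ⟨hS, fun p hp hpv => ?_⟩
  have : Fact p.Prime := ⟨hp⟩
  obtain ⟨x, hx⟩ := exists_prime_addOrderOf_dvd_card p (hv ▸ hpv)
  set r := #(blocksThrough 𝓑 x)
  have hrx : r • x = x := neg_injective (by rw [← hsum x, hS, zero_sub])
  have hpr : (p : ℤ) ∣ r - 1 := hx ▸ addOrderOf_dvd_iff_zsmul_eq_zero.2 (by simp [sub_zsmul, hrx])
  have hcount := card_blocksThrough_mul hcard hpair x
  rw [hv] at hcount
  have hk : (k : ℤ) = v - (r - 1) * (k - 1) := by linear_combination hcount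
  exact Int.natCast_dvd_natCast.1 (hk ▸ dvd_sub (Int.natCast_dvd_natCast.2 hpv) (hpr.mul_right _))

/-- If `𝓑` is a strictly `G`-additive 2-(v,k,1) design on a finite abelian group `G`
of order `v`, then `G` is zero-sum and every prime dividing `v` divides `k`
(i.e. `rad v ∣ k`). -/
theorem stmt_3 (G : Type*) [AddCommGroup G] [Fintype G] (v k : ℕ)
    (hv : Fintype.card G = v) (hk2 : 2 ≤ k) (hkv : k ≤ v)
    (𝓑 : Finset (Finset G))
    (hcard : ∀ B ∈ 𝓑, B.card = k)
    (hpair : ∀ x y : G, x ≠ y → ∃! B, B ∈ 𝓑 ∧ x ∈ B ∧ y ∈ B)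
    (hzs : ∀ B ∈ 𝓑, ∑ x ∈ B, x = 0) :
    (∑ g : G, g = 0) ∧ ∀ p : ℕ, p.Prime → p ∣ v → p ∣ k :=
  stmt_3_general G v k hv 𝓑 hcard hpair hzs
end

section
/- There is no strictly additive 2-(v,k,1) design with v ≡ 2 (mod 4): if G is a finite abelian group of order v with v ≡ 2 (mod 4), then there is no set 𝓑 of k-element subsets of G (2 ≤ k ≤ v) such that every pair of distinct elements of G lies in exactly one member of 𝓑 and every member of 𝓑 sums to zero in G. -/
/-!
Let `ι` be an element of order `2` in `G`. Since `4 ∤ |G|`, `ι` is the only involution, so pairing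
each `x` with `-x` gives `∑_{x ∈ G} x = ι`. In a 2-(v,k,1) design every point lies on the same
number `r` of blocks, and `r (k - 1) = v - 1` is odd, so `r` is odd. Summing all block sums,
`0 = ∑_B ∑_{x ∈ B} x = r ∑_{x ∈ G} x = r ι = ι`, a contradiction.
-/

open Finset

section TwoTorsion

variable {G : Type*} [AddCommGroup G]

lemma eq_zero_of_two_nsmul_eq_zero_of_odd_card [Finite G] (hG : Odd (Nat.card G)) {x : G}
    (hx : 2 • x = 0) : x = 0 := by
  have hodd : Odd (addOrderOf x) := hG.of_dvd_nat (addOrderOf_dvd_natCard x)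
  rw [← AddMonoid.addOrderOf_eq_one_iff]
  rcases (Nat.dvd_prime Nat.prime_two).1 (addOrderOf_dvd_of_nsmul_eq_zero hx) with h | h
  · exact h
  · rw [h] at hodd; exact absurd hodd (by decide)

lemma eq_zero_or_eq_of_two_nsmul_eq_zero [Finite G] (hG : ¬ 4 ∣ Nat.card G) {ι : G}
    (hι : addOrderOf ι = 2) {x : G} (hx : 2 • x = 0) : x = 0 ∨ x = ι := by
  classical
  set H := AddSubgroup.zmultiples ι
  -- `G ⧸ ⟨ι⟩` has odd order, hence no element of order `2`.
  have hquot : Odd (Nat.card (G ⧸ H)) := by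
    have := AddSubgroup.card_eq_card_quotient_mul_card_addSubgroup H
    rw [Nat.card_zmultiples, hι] at this
    rw [Nat.odd_iff]; omega
  have hxH : x ∈ H := by
    rw [← QuotientAddGroup.eq_zero_iff]
    refine eq_zero_of_two_nsmul_eq_zero_of_odd_card hquot ?_
    rw [← QuotientAddGroup.mk_nsmul, hx, QuotientAddGroup.mk_zero]
  rw [mem_zmultiples_iff_mem_range_addOrderOf, hι] at hxH
  obtain ⟨n, hn, rfl⟩ := mem_image.1 hxH
  rw [mem_range] at hn
  interval_cases n <;> simp

variable [Fintype G] [DecidableEq G]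

lemma sum_univ_eq_sum_two_torsion :
    ∑ x : G, x = ∑ x with 2 • x = 0, x := by
  rw [← sum_filter_add_sum_filter_not univ (fun x : G => 2 • x = 0), add_eq_left]
  refine sum_involution (fun x _ => -x) (fun x _ => add_neg_cancel x) ?_ ?_ fun x _ => neg_neg x
  · intro x hx _ hneg
    exact (mem_filter.1 hx).2 (by rw [two_nsmul]; nth_rw 1 [← hneg]; exact neg_add_cancel x)
  · intro x hx
    simpa [nsmul_neg] using hx

lemma sum_univ_eq_of_addOrderOf_eq_two (hG : ¬ 4 ∣ Nat.card G) {ι : G} (hι : addOrderOf ι = 2) :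
    ∑ x : G, x = ι := by
  have hι0 : ι ≠ 0 := by rintro rfl; simp at hι
  have : ({x | 2 • x = 0} : Finset G) = {0, ι} := by
    ext x
    simp only [mem_filter, mem_univ, true_and, mem_insert, mem_singleton]
    refine ⟨eq_zero_or_eq_of_two_nsmul_eq_zero hG hι, ?_⟩
    rintro (rfl | rfl)
    exacts [nsmul_zero 2, hι ▸ addOrderOf_nsmul_eq_zero _]
  rw [sum_univ_eq_sum_two_torsion, this, sum_pair hι0.symm, zero_add]

end TwoTorsion

lemma Finset.sum_sum_eq_sum_card_filter_mem_nsmul {V M : Type*} [Fintype V] [DecidableEq V]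
    [AddCommMonoid M] (𝓑 : Finset (Finset V)) (f : V → M) :
    ∑ B ∈ 𝓑, ∑ x ∈ B, f x = ∑ x, #{B ∈ 𝓑 | x ∈ B} • f x := by
  calc ∑ B ∈ 𝓑, ∑ x ∈ B, f x = ∑ B ∈ 𝓑, ∑ x, if x ∈ B then f x else 0 := by
        simp only [sum_ite_mem, univ_inter]
    _ = ∑ x, ∑ B ∈ 𝓑, if x ∈ B then f x else 0 := sum_comm
    _ = ∑ x, #{B ∈ 𝓑 | x ∈ B} • f x := by simp only [← sum_filter, sum_const]

/-- `𝓑` is the block set of a 2-(`Fintype.card V`, `k`, 1) design on `V`. -/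
structure IsSteinerDesign {V : Type*} (k : ℕ) (𝓑 : Finset (Finset V)) : Prop where
  card_eq : ∀ B ∈ 𝓑, #B = k
  existsUnique_mem : ∀ x y : V, x ≠ y → ∃! B, B ∈ 𝓑 ∧ x ∈ B ∧ y ∈ B

namespace IsSteinerDesign

variable {V : Type*} [Fintype V] [DecidableEq V] {k : ℕ} {𝓑 : Finset (Finset V)}

lemma card_filter_mem_mul (h𝓑 : IsSteinerDesign k 𝓑) (x : V) :
    #{B ∈ 𝓑 | x ∈ B} * (k - 1) = Fintype.card V - 1 := by
  have hdisj : (({B ∈ 𝓑 | x ∈ B} : Finset _) : Set (Finset V)).PairwiseDisjoint (·.erase x) := by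
    intro B₁ hB₁ B₂ hB₂ hne
    simp only [coe_filter, Set.mem_ofPred_eq] at hB₁ hB₂
    refine disjoint_left.2 fun y hy₁ hy₂ => hne ?_
    rw [mem_erase] at hy₁ hy₂
    exact (h𝓑.existsUnique_mem x y (Ne.symm hy₁.1)).unique ⟨hB₁.1, hB₁.2, hy₁.2⟩
      ⟨hB₂.1, hB₂.2, hy₂.2⟩
  have hcover : ({B ∈ 𝓑 | x ∈ B} : Finset _).biUnion (·.erase x) = univ.erase x := by
    ext y
    simp only [mem_biUnion, mem_filter, mem_erase, mem_univ, and_true]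
    refine ⟨fun ⟨_, _, hy⟩ => hy.1, fun hyx => ?_⟩
    obtain ⟨B, ⟨hB, hxB, hyB⟩, -⟩ := h𝓑.existsUnique_mem x y (Ne.symm hyx)
    exact ⟨B, ⟨hB, hxB⟩, hyx, hyB⟩
  calc #{B ∈ 𝓑 | x ∈ B} * (k - 1) = ∑ B ∈ 𝓑 with x ∈ B, (k - 1) := by
        rw [sum_const, smul_eq_mul]
    _ = ∑ B ∈ 𝓑 with x ∈ B, #(B.erase x) := by
        refine sum_congr rfl fun B hB => ?_
        rw [mem_filter] at hB
        rw [card_erase_of_mem hB.2, h𝓑.card_eq B hB.1]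
    _ = Fintype.card V - 1 := by
        rw [← card_biUnion hdisj, hcover, card_erase_of_mem (mem_univ x), card_univ]

lemma sum_sum_eq_nsmul_sum {M : Type*} [AddCommMonoid M] (h𝓑 : IsSteinerDesign k 𝓑)
    (hk : 2 ≤ k) (f : V → M) (x₀ : V) :
    ∑ B ∈ 𝓑, ∑ x ∈ B, f x = #{B ∈ 𝓑 | x₀ ∈ B} • ∑ x, f x := by
  have hconst (x : V) : #{B ∈ 𝓑 | x ∈ B} = #{B ∈ 𝓑 | x₀ ∈ B} :=
    Nat.eq_of_mul_eq_mul_right (by omega)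
      ((h𝓑.card_filter_mem_mul x).trans (h𝓑.card_filter_mem_mul x₀).symm)
  simp only [sum_sum_eq_sum_card_filter_mem_nsmul, hconst, smul_sum]

end IsSteinerDesign

theorem stmt_4_general (G : Type*) [AddCommGroup G] [Fintype G] (v k : ℕ)
    (hv : Fintype.card G = v) (hv4 : v % 4 = 2) :
    ¬ ∃ 𝓑 : Finset (Finset G),
        (∀ B ∈ 𝓑, B.card = k) ∧
        (∀ x y : G, x ≠ y → ∃! B, B ∈ 𝓑 ∧ x ∈ B ∧ y ∈ B) ∧
        (∀ B ∈ 𝓑, ∑ x ∈ B, x = 0) := by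
  classical
  rintro ⟨𝓑, hcard, hpair, hsum⟩
  have h𝓑 : IsSteinerDesign k 𝓑 := ⟨hcard, hpair⟩
  obtain ⟨ι, hι⟩ := exists_prime_addOrderOf_dvd_card 2 (by omega : 2 ∣ Fintype.card G)
  obtain ⟨hr, hk⟩ : Odd #{B ∈ 𝓑 | ι ∈ B} ∧ Odd (k - 1) := by
    rw [← Nat.odd_mul, h𝓑.card_filter_mem_mul, hv, Nat.odd_iff]
    omega
  have hι0 : ι ≠ 0 := by rintro rfl; simp at hι
  refine hι0 ?_
  calc ι = #{B ∈ 𝓑 | ι ∈ B} • ι := by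
        rw [← mod_addOrderOf_nsmul, hι, Nat.odd_iff.1 hr, one_nsmul]
    _ = #{B ∈ 𝓑 | ι ∈ B} • ∑ x : G, x := by
        rw [sum_univ_eq_of_addOrderOf_eq_two (by rw [Nat.card_eq_fintype_card, hv]; omega) hι]
    _ = ∑ B ∈ 𝓑, ∑ x ∈ B, x := (h𝓑.sum_sum_eq_nsmul_sum (by have := hk.pos; omega) id ι).symm
    _ = 0 := sum_eq_zero hsum

/-- There is no strictly additive 2-(v,k,1) design with `v ≡ 2 (mod 4)`. -/
theorem stmt_4 (G : Type*) [AddCommGroup G] [Fintype G] (v k : ℕ)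
    (hv : Fintype.card G = v) (hv4 : v % 4 = 2) (hk2 : 2 ≤ k) (hkv : k ≤ v) :
    ¬ ∃ 𝓑 : Finset (Finset G),
        (∀ B ∈ 𝓑, B.card = k) ∧
        (∀ x y : G, x ≠ y → ∃! B, B ∈ 𝓑 ∧ x ∈ B ∧ y ∈ B) ∧
        (∀ B ∈ 𝓑, ∑ x ∈ B, x = 0) :=
  stmt_4_general G v k hv hv4
end

section
/- Let G be a finite abelian group of order v and let 𝓑 be a G-regular 2-(v,k,1) design on G with 2 ≤ k ≤ v. Then v ≡ 1 (mod k(k−1)) or v ≡ k (mod k(k−1)). -/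
/-!
Translation by `G` permutes the blocks. If a block `B` is fixed by a nonzero `d`, then for
`b, x ∈ B` the translate `(x - b) +ᵥ B` shares the pair `{x, x + d}` with `B`, hence equals it:
`B` is a coset of its stabilizer, which therefore has order `k`. So every block orbit has `v` or
`v / k` elements, the latter only if `k ∣ v`. Counting pairs, `v (v - 1) = b k (k - 1)` with
`b = n v + t v / k`, i.e. `v - 1 = (n k + t) (k - 1)`. For `t = 0` this is `v ≡ 1`; if `k ∣ v`
it forces `k ∣ t - 1`, hence `v ≡ k (mod k (k - 1))`.
-/

open Finset Pointwise AddAction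

theorem AddAction.card_dvd_mul_card_of_card_stabilizer_eq {G α : Type*} [AddGroup G] [Finite G]
    [AddAction G α] {X : Finset α} (hX : ∀ x ∈ X, ∀ g : G, g +ᵥ x ∈ X) {c : ℕ}
    (hc : ∀ x ∈ X, Nat.card (stabilizer G x) = c) : Nat.card G ∣ c * #X := by
  classical
  rw [card_eq_sum_card_fiberwise fun x hx => mem_image_of_mem (orbit G) hx, mul_sum]
  refine dvd_sum fun O hO => ?_
  obtain ⟨x, hx, rfl⟩ := mem_image.mp hO
  have hfiber : (↑{y ∈ X | orbit G y = orbit G x} : Set α) = orbit G x := by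
    ext y
    simp only [coe_filter, orbit_eq_iff]
    refine ⟨And.right, fun hy => ⟨?_, hy⟩⟩
    obtain ⟨g, rfl⟩ := hy
    exact hX x hx g
  rw [← Set.ncard_coe_finset, hfiber, ← index_stabilizer, ← hc x hx,
    AddSubgroup.card_mul_index]

theorem AddAction.card_dvd_mul_card_filter_card_stabilizer_eq {G α : Type*} [AddCommGroup G]
    [Finite G] [AddAction G α] {X : Finset α} (hX : ∀ x ∈ X, ∀ g : G, g +ᵥ x ∈ X) (c : ℕ) :
    Nat.card G ∣ c * #{x ∈ X | Nat.card (stabilizer G x) = c} := by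
  refine card_dvd_mul_card_of_card_stabilizer_eq (fun x hx g => ?_)
    fun x hx => (mem_filter.mp hx).2
  rw [mem_filter, stabilizer_vadd_eq_right] at *
  exact ⟨hX x hx.1 g, hx.2⟩

theorem card_mul_sub_one_eq_card_blocks_mul {α : Type*} [Fintype α] [DecidableEq α]
    {𝓑 : Finset (Finset α)} {k : ℕ} (hcard : ∀ B ∈ 𝓑, #B = k)
    (hpair : ∀ x y : α, x ≠ y → ∃! B, B ∈ 𝓑 ∧ x ∈ B ∧ y ∈ B) :
    Fintype.card α * (Fintype.card α - 1) = #𝓑 * (k * (k - 1)) := by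
  have hunion : (univ : Finset α).offDiag = 𝓑.biUnion offDiag := by
    ext ⟨x, y⟩
    simp only [mem_offDiag, mem_univ, true_and, mem_biUnion]
    constructor
    · intro hxy
      obtain ⟨B, ⟨hB, hx, hy⟩, -⟩ := hpair x y hxy
      exact ⟨B, hB, hx, hy, hxy⟩
    · rintro ⟨B, -, -, -, hxy⟩
      exact hxy
  have hdisj : (𝓑 : Set (Finset α)).PairwiseDisjoint offDiag := by
    intro B hB C hC hBC
    refine disjoint_left.mpr fun ⟨x, y⟩ hB' hC' => hBC ?_
    rw [mem_offDiag] at hB' hC'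
    exact (hpair x y hB'.2.2).unique ⟨hB, hB'.1, hB'.2.1⟩ ⟨hC, hC'.1, hC'.2.1⟩
  rw [← card_univ, Nat.mul_sub_one, ← offDiag_card, hunion, card_biUnion hdisj,
    sum_congr rfl fun B hB => by rw [offDiag_card, hcard B hB], sum_const, smul_eq_mul,
    Nat.mul_sub_one]

section RegularDesign

variable {G : Type*} [AddCommGroup G] [DecidableEq G] {𝓑 : Finset (Finset G)}

theorem card_stabilizer_eq_card_of_mem_stabilizer
    (hpair : ∀ x y : G, x ≠ y → ∃! B, B ∈ 𝓑 ∧ x ∈ B ∧ y ∈ B)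
    (hreg : ∀ B ∈ 𝓑, ∀ g : G, g +ᵥ B ∈ 𝓑) {B : Finset G} (hB : B ∈ 𝓑) {b d : G} (hb : b ∈ B)
    (hd : d ∈ stabilizer G B) (hd0 : d ≠ 0) : Nat.card (stabilizer G B) = #B := by
  have hshift : ∀ x ∈ B, x + d ∈ B := fun x hx => by
    rw [add_comm, ← mem_stabilizer_iff.mp hd]
    exact vadd_mem_vadd_finset hx
  have hmem : ∀ x, x ∈ B ↔ x - b ∈ stabilizer G B := by
    intro x
    constructor
    · intro hx
      have hx' : x ∈ (x - b) +ᵥ B := by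
        simpa using vadd_mem_vadd_finset (a := x - b) hb
      have hxd' : x + d ∈ (x - b) +ᵥ B := by
        have h := vadd_mem_vadd_finset (a := x - b) (hshift b hb)
        rwa [vadd_eq_add, ← add_assoc, sub_add_cancel] at h
      rw [mem_stabilizer_iff]
      exact (hpair x (x + d) (by simpa using hd0)).unique
        ⟨hreg B hB _, hx', hxd'⟩ ⟨hB, hx, hshift x hx⟩
    · intro hx
      rw [← mem_stabilizer_iff.mp hx]
      simpa using vadd_mem_vadd_finset (a := x - b) hb
  rw [← Nat.card_eq_finsetCard]
  exact (Nat.card_congr (Equiv.subtypeEquiv (Equiv.subRight b) hmem)).symm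

theorem card_stabilizer_eq_one_or_card
    (hpair : ∀ x y : G, x ≠ y → ∃! B, B ∈ 𝓑 ∧ x ∈ B ∧ y ∈ B)
    (hreg : ∀ B ∈ 𝓑, ∀ g : G, g +ᵥ B ∈ 𝓑) {B : Finset G} (hB : B ∈ 𝓑) (hne : B.Nonempty) :
    Nat.card (stabilizer G B) = 1 ∨ Nat.card (stabilizer G B) = #B := by
  rcases (stabilizer G B).bot_or_exists_ne_zero with h | ⟨d, hd, hd0⟩
  · exact .inl (AddSubgroup.card_eq_one.mpr h)
  · exact .inr (card_stabilizer_eq_card_of_mem_stabilizer hpair hreg hB hne.choose_spec hd hd0)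

end RegularDesign

theorem Nat.modEq_one_or_modEq_of_mul_sub_one_eq {v k f s : ℕ} (hv : 1 ≤ v) (hk : 1 ≤ k)
    (hcount : v * (v - 1) = (f + s) * (k * (k - 1))) (hf : v ∣ f) (hs : v ∣ k * s)
    (hks : s = 0 ∨ k ∣ v) : v ≡ 1 [MOD k * (k - 1)] ∨ v ≡ k [MOD k * (k - 1)] := by
  obtain ⟨n, rfl⟩ := hf
  obtain ⟨t, ht⟩ := hs
  have hsub : v - 1 = (n * k + t) * (k - 1) := by
    refine Nat.eq_of_mul_eq_mul_left (by positivity : 0 < v * k) ?_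
    calc v * k * (v - 1) = k * (v * (v - 1)) := by ring
      _ = (k * (v * n) + k * s) * (k * (k - 1)) := by rw [hcount]; ring
      _ = v * k * ((n * k + t) * (k - 1)) := by rw [ht]; ring
  have hz : (v : ℤ) - 1 = (n * k + t) * (k - 1) := by
    have := congrArg (Nat.cast : ℕ → ℤ) hsub
    push_cast [hv, hk] at this
    exact this
  rcases hks with rfl | ⟨w, rfl⟩
  · obtain rfl : t = 0 :=
      (Nat.mul_eq_zero.mp (ht.symm.trans (mul_zero k))).resolve_left (by omega)
    left
    refine Nat.modEq_iff_dvd.mpr ⟨-n, ?_⟩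
    push_cast [hk]
    linear_combination -hz
  · right
    refine Nat.modEq_iff_dvd.mpr ⟨w - (n * k + t), ?_⟩
    push_cast [hk] at hz ⊢
    linear_combination -k * hz

theorem stmt_5_general (G : Type*) [AddCommGroup G] [Fintype G] [DecidableEq G] (v k : ℕ)
    (hv : Fintype.card G = v) (hk2 : 2 ≤ k)
    (𝓑 : Finset (Finset G))
    (hcard : ∀ B ∈ 𝓑, B.card = k)
    (hpair : ∀ x y : G, x ≠ y → ∃! B, B ∈ 𝓑 ∧ x ∈ B ∧ y ∈ B)
    (hreg : ∀ B ∈ 𝓑, ∀ g : G, B.image (· + g) ∈ 𝓑) :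
    v ≡ 1 [MOD k * (k - 1)] ∨ v ≡ k [MOD k * (k - 1)] := by
  have hG : Nat.card G = v := Nat.card_eq_fintype_card.trans hv
  have hreg' : ∀ B ∈ 𝓑, ∀ g : G, g +ᵥ B ∈ 𝓑 := fun B hB g => by
    simpa [← image_vadd, add_comm] using hreg B hB g
  have hstab (B) (hB : B ∈ 𝓑) :
      Nat.card (stabilizer G B) = 1 ∨ Nat.card (stabilizer G B) = k := by
    rw [← hcard B hB]
    exact card_stabilizer_eq_one_or_card hpair hreg' hB (card_pos.mp (by rw [hcard B hB]; omega))
  have hsplit : #{B ∈ 𝓑 | Nat.card (stabilizer G B) = 1}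
      + #{B ∈ 𝓑 | Nat.card (stabilizer G B) = k} = #𝓑 := by
    rw [← card_union_of_disjoint (disjoint_filter.mpr fun B _ h1 hk => by omega), ← filter_or,
      filter_true_of_mem hstab]
  refine Nat.modEq_one_or_modEq_of_mul_sub_one_eq (hv ▸ Fintype.card_pos) (by omega) ?_
    (by simpa only [hG, one_mul] using card_dvd_mul_card_filter_card_stabilizer_eq hreg' 1)
    (hG ▸ card_dvd_mul_card_filter_card_stabilizer_eq hreg' k) ?_
  · rw [hsplit, ← hv]
    exact card_mul_sub_one_eq_card_blocks_mul hcard hpair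
  · rcases eq_empty_or_nonempty {B ∈ 𝓑 | Nat.card (stabilizer G B) = k} with hS | ⟨B, hB⟩
    · exact .inl (card_eq_zero.mpr hS)
    · exact .inr (hG ▸ (mem_filter.mp hB).2 ▸ (stabilizer G B).card_addSubgroup_dvd_card)

/-- A `G`-regular 2-(v,k,1) design can exist only if `v ≡ 1` or `v ≡ k (mod k(k-1))`. -/
theorem stmt_5 (G : Type*) [AddCommGroup G] [Fintype G] [DecidableEq G] (v k : ℕ)
    (hv : Fintype.card G = v) (hk2 : 2 ≤ k) (hkv : k ≤ v)
    (𝓑 : Finset (Finset G))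
    (hcard : ∀ B ∈ 𝓑, B.card = k)
    (hpair : ∀ x y : G, x ≠ y → ∃! B, B ∈ 𝓑 ∧ x ∈ B ∧ y ∈ B)
    (hreg : ∀ B ∈ 𝓑, ∀ g : G, B.image (· + g) ∈ 𝓑) :
    v ≡ 1 [MOD k * (k - 1)] ∨ v ≡ k [MOD k * (k - 1)] :=
  stmt_5_general G v k hv hk2 𝓑 hcard hpair hreg
end

section
/- Let G be a finite abelian group of order v and let 𝓑 be a G-super-regular 2-(v,k,1) design on G with 2 ≤ k ≤ v. Then: (i) kg = 0 for every g ∈ G (the order of every element of G divides k); (ii) v ≡ k (mod k(k−1)); (iii) rad(v) = rad(k); (iv) k ≢ 2 (mod 4). -/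
/-!
Translating a block `B` by `g` adds `k • g` to its sum, so `k • g = 0` for all `g`, and every
prime divisor of `v` divides `k` (Cauchy). If a block `B ∋ 0` is fixed by a translation `g ≠ 0`,
then each translate `-x +ᵥ B` (`x ∈ B`) is a block containing `0` and `g`, hence equals `B`:
so `B` is the subgroup `stabilizer G B`, of order `k`. If no block through `0` has a nontrivial
stabilizer, the blocks through `0` fall into classes of exactly `k` translates of each other, so
`k` divides the replication number `r = (v - 1)/(k - 1)` and hence `v - 1`, contradicting the
existence of a prime divisor of `v` dividing `k`.

A subgroup of order `k` gives `k ∣ v`, whence (ii) and (iii). For (iv), a finite abelian group of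
order `≡ 2 (mod 4)` has a unique element of order `2`, which is the sum of all its elements; but
the block `H` sums to zero.
-/

open Finset Pointwise AddAction

section Translates

variable {G : Type*} [AddCommGroup G] [DecidableEq G]

theorem image_add_right_eq_vadd_finset (B : Finset G) (g : G) : B.image (· + g) = g +ᵥ B := by
  simp only [← image_vadd, vadd_eq_add, add_comm]

theorem sum_vadd_finset (g : G) (B : Finset G) : ∑ x ∈ g +ᵥ B, x = ∑ x ∈ B, x + #B • g := by
  simp only [← image_vadd, vadd_eq_add]
  rw [sum_image fun x _ y _ h => add_left_cancel h, sum_add_distrib, sum_const, add_comm]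

theorem mem_of_mem_stabilizer {B : Finset G} (h0 : (0 : G) ∈ B) {g : G}
    (hg : g ∈ stabilizer G B) : g ∈ B := by
  simpa [mem_stabilizer_iff.mp hg] using vadd_mem_vadd_finset (a := g) h0

/-- The translates of `B` that contain `0`. -/
def translatesThroughZero (B : Finset G) : Finset (Finset G) :=
  B.image fun x : G => -x +ᵥ B

theorem translatesThroughZero_vadd (g : G) (B : Finset G) :
    translatesThroughZero (g +ᵥ B) = translatesThroughZero B := by
  unfold translatesThroughZero
  conv_lhs => arg 2; rw [← image_vadd]
  rw [image_image]
  refine image_congr fun x _ => ?_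
  simp only [Function.comp_apply, vadd_eq_add, vadd_vadd]
  congr 1
  abel

theorem mem_translatesThroughZero_self {B : Finset G} (h0 : (0 : G) ∈ B) :
    B ∈ translatesThroughZero B :=
  mem_image.mpr ⟨0, h0, by rw [neg_zero, zero_vadd]⟩

theorem zero_mem_of_mem_translatesThroughZero {B C : Finset G}
    (hC : C ∈ translatesThroughZero B) : (0 : G) ∈ C := by
  obtain ⟨x, hx, rfl⟩ := mem_image.mp hC
  simpa using vadd_mem_vadd_finset (a := -x) hx

theorem card_translatesThroughZero {B : Finset G} (h : stabilizer G B = ⊥) :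
    #(translatesThroughZero B) = #B := by
  refine card_image_of_injective _ fun x y hxy => ?_
  have : x + -y ∈ stabilizer G B := by
    rw [mem_stabilizer_iff, ← vadd_vadd, ← hxy, vadd_neg_vadd]
  rwa [h, AddSubgroup.mem_bot, add_neg_eq_zero] at this

end Translates

theorem Nat.Prime.dvd_of_dvd_card_of_forall_nsmul_eq_zero {G : Type*} [AddGroup G] [Fintype G]
    {k p : ℕ} (hp : p.Prime) (hk : ∀ g : G, k • g = 0) (hpG : p ∣ Fintype.card G) : p ∣ k := by
  have := Fact.mk hp
  obtain ⟨g, hg⟩ := exists_prime_addOrderOf_dvd_card p hpG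
  exact hg ▸ addOrderOf_dvd_of_nsmul_eq_zero (hk g)

theorem AddSubgroup.natCard_eq_card_of_coe_eq {G : Type*} [AddGroup G] {H : Finset G}
    {S : AddSubgroup G} (hHS : (H : Set G) = S) : Nat.card S = #H := by
  rw [← SetLike.coe_sort_coe, ← hHS, Nat.card_coe_set_eq, Set.ncard_coe_finset]

section TwoTorsion

variable {G : Type*} [AddCommGroup G]

theorem sum_univ_eq_sum_filter_two_nsmul_eq_zero [Fintype G] [DecidableEq G] :
    ∑ x : G, x = ∑ x with 2 • x = 0, x := by
  rw [← sum_filter_add_sum_filter_not univ (fun x : G => 2 • x = 0), add_eq_left]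
  refine sum_involution (fun x _ => -x) (fun x _ => add_neg_cancel x) (fun x hx _ hneg => ?_)
    (fun x hx => ?_) fun x _ => neg_neg x
  · exact (mem_filter.mp hx).2 (two_nsmul x ▸ neg_eq_iff_add_eq_zero.mp hneg)
  · simpa [mem_filter, smul_neg] using (mem_filter.mp hx).2

theorem card_filter_two_nsmul_eq_zero_le_two [Fintype G] [DecidableEq G]
    (h : ¬ 4 ∣ Nat.card G) : #{x : G | 2 • x = 0} ≤ 2 := by
  let K : AddSubgroup G := (nsmulAddMonoidHom 2 : G →+ G).ker
  -- `K` is a vector space over `ZMod 2`, so its order is a power of `2` dividing `|G|`.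
  let _ : Module (ZMod 2) K := AddCommGroup.zmodModule fun x => Subtype.ext x.2
  have hK : Nat.card K = #{x : G | 2 • x = 0} := by
    rw [Nat.card_eq_fintype_card, Fintype.card_subtype]
    simp [K]
  obtain ⟨n, hn⟩ : ∃ n, Nat.card K = 2 ^ n :=
    ⟨_, by rw [Module.natCard_eq_pow_finrank (K := ZMod 2), Nat.card_zmod]⟩
  rw [← hK, hn]
  by_contra! h2
  have hn2 : 2 ≤ n := by
    by_contra!
    interval_cases n <;> simp at h2
  exact h ((pow_dvd_pow 2 hn2).trans (hn ▸ K.card_addSubgroup_dvd_card))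

theorem sum_univ_ne_zero_of_card_mod_four_eq_two [Fintype G] (h : Nat.card G % 4 = 2) :
    ∑ x : G, x ≠ 0 := by
  classical
  have := Fact.mk Nat.prime_two
  obtain ⟨ι, hι⟩ := exists_prime_addOrderOf_dvd_card (G := G) 2
    (by rw [← Nat.card_eq_fintype_card]; omega)
  have hι0 : ι ≠ 0 := by rintro rfl; simp at hι
  have hT : ({0, ι} : Finset G) = ({x | 2 • x = 0} : Finset G) := by
    refine eq_of_subset_of_card_le (fun x hx => ?_) ?_
    · rcases mem_insert.mp hx with rfl | hx
      · simp
      · simpa [mem_singleton.mp hx] using hι ▸ addOrderOf_nsmul_eq_zero ι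
    · rw [card_pair hι0.symm]
      exact card_filter_two_nsmul_eq_zero_le_two (by omega)
  rwa [sum_univ_eq_sum_filter_two_nsmul_eq_zero, ← hT, sum_pair hι0.symm, zero_add]

theorem AddSubgroup.sum_ne_zero_of_coe_eq {H : Finset G} {S : AddSubgroup G}
    (hHS : (H : Set G) = S) (h : #H % 4 = 2) : ∑ x ∈ H, x ≠ 0 := by
  classical
  have hmem : ∀ x, x ∈ H ↔ x ∈ S := fun x => by rw [← mem_coe, hHS, SetLike.mem_coe]
  have : Fintype S := Fintype.ofFinset H hmem
  rw [sum_subtype H hmem fun x => x]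
  intro h0
  refine sum_univ_ne_zero_of_card_mod_four_eq_two (G := S) (natCard_eq_card_of_coe_eq hHS ▸ h)
    (Subtype.val_injective ?_)
  rw [AddSubmonoidClass.coe_finsetSum, ZeroMemClass.coe_zero, ← h0]

end TwoTorsion

theorem Nat.modEq_of_dvd_of_sub_one_dvd {v k : ℕ} (hkv : k ≤ v) (hk : k ∣ v)
    (hk1 : k - 1 ∣ v - 1) : v ≡ k [MOD k * (k - 1)] := by
  obtain rfl | hk0 := k.eq_zero_or_pos
  · simp_all
  have hco : k.Coprime (k - 1) := (Nat.coprime_self_sub_right hk0).mpr (Nat.coprime_one_right k)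
  refine ((Nat.modEq_iff_dvd' hkv).mpr (hco.mul_dvd_of_dvd_of_dvd (Nat.dvd_sub hk dvd_rfl) ?_)).symm
  rw [show v - k = (v - 1) - (k - 1) by omega]
  exact Nat.dvd_sub hk1 dvd_rfl

theorem card_sub_one_eq_card_filter_mem_mul {α : Type*} [Fintype α] [DecidableEq α]
    {𝓑 : Finset (Finset α)} {k : ℕ} (hcard : ∀ B ∈ 𝓑, #B = k)
    (hpair : ∀ x y : α, x ≠ y → ∃! B, B ∈ 𝓑 ∧ x ∈ B ∧ y ∈ B) (a : α) :
    Fintype.card α - 1 = #{B ∈ 𝓑 | a ∈ B} * (k - 1) := by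
  have hcover : univ.erase a = {B ∈ 𝓑 | a ∈ B}.biUnion (·.erase a) := by
    ext x
    simp only [mem_erase, mem_univ, and_true, mem_biUnion, mem_filter]
    refine ⟨fun hx => ?_, fun ⟨B, _, hx⟩ => hx.1⟩
    obtain ⟨B, ⟨hB, haB, hxB⟩, -⟩ := hpair a x (Ne.symm hx)
    exact ⟨B, ⟨hB, haB⟩, hx, hxB⟩
  have hdisj : (({B ∈ 𝓑 | a ∈ B} : Finset _) : Set (Finset α)).PairwiseDisjoint (·.erase a) := by
    intro B hB C hC hBC
    simp only [mem_coe, mem_filter] at hB hC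
    refine disjoint_left.mpr fun x hxB hxC => hBC ?_
    rw [mem_erase] at hxB hxC
    exact (hpair a x (Ne.symm hxB.1)).unique ⟨hB.1, hB.2, hxB.2⟩ ⟨hC.1, hC.2, hxC.2⟩
  rw [← card_univ, ← card_erase_of_mem (mem_univ a), hcover, card_biUnion hdisj,
    sum_congr rfl fun B hB => ?_, sum_const, smul_eq_mul]
  rw [mem_filter] at hB
  rw [card_erase_of_mem hB.2, hcard B hB.1]

section Design

variable {G : Type*} [AddCommGroup G] [DecidableEq G] {𝓑 : Finset (Finset G)} {k : ℕ}

theorem card_nsmul_eq_zero_of_vadd_mem (hreg : ∀ B ∈ 𝓑, ∀ g : G, g +ᵥ B ∈ 𝓑)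
    (hzs : ∀ B ∈ 𝓑, ∑ x ∈ B, x = 0) {B : Finset G} (hB : B ∈ 𝓑) (g : G) : #B • g = 0 := by
  simpa [sum_vadd_finset, hzs B hB] using hzs _ (hreg B hB g)

theorem coe_eq_stabilizer_of_ne_zero (hpair : ∀ x y : G, x ≠ y → ∃! B, B ∈ 𝓑 ∧ x ∈ B ∧ y ∈ B)
    (hreg : ∀ B ∈ 𝓑, ∀ g : G, g +ᵥ B ∈ 𝓑) {B : Finset G} (hB : B ∈ 𝓑) (h0 : (0 : G) ∈ B)
    {g : G} (hg : g ∈ stabilizer G B) (hg0 : g ≠ 0) : (B : Set G) = stabilizer G B := by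
  refine subset_antisymm (fun x hx => ?_) fun x => mem_of_mem_stabilizer h0
  have hx0 : (0 : G) ∈ -x +ᵥ B := by simpa using vadd_mem_vadd_finset (a := -x) hx
  have hgx : g ∈ stabilizer G (-x +ᵥ B) := by rwa [stabilizer_vadd_eq_right]
  have : -x +ᵥ B = B := (hpair 0 g hg0.symm).unique
    ⟨hreg B hB (-x), hx0, mem_of_mem_stabilizer hx0 hgx⟩ ⟨hB, h0, mem_of_mem_stabilizer h0 hg⟩
  simpa using neg_mem (mem_stabilizer_iff.mpr this)

theorem dvd_card_filter_zero_mem (hcard : ∀ B ∈ 𝓑, #B = k)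
    (hreg : ∀ B ∈ 𝓑, ∀ g : G, g +ᵥ B ∈ 𝓑)
    (hfree : ∀ B ∈ 𝓑, (0 : G) ∈ B → stabilizer G B = ⊥) : k ∣ #{B ∈ 𝓑 | (0 : G) ∈ B} := by
  have hfiber : ∀ B ∈ {B ∈ 𝓑 | (0 : G) ∈ B},
      {C ∈ 𝓑 | (0 : G) ∈ C ∧ translatesThroughZero C = translatesThroughZero B} =
        translatesThroughZero B := by
    intro B hB
    ext C
    simp only [mem_filter]
    refine ⟨fun ⟨_, hC0, hCB⟩ => hCB ▸ mem_translatesThroughZero_self hC0, fun hC => ?_⟩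
    obtain ⟨x, -, rfl⟩ := mem_image.mp hC
    exact ⟨hreg B (mem_filter.mp hB).1 (-x), zero_mem_of_mem_translatesThroughZero hC,
      translatesThroughZero_vadd _ _⟩
  rw [card_eq_sum_card_fiberwise (f := translatesThroughZero)
    (t := {B ∈ 𝓑 | (0 : G) ∈ B}.image translatesThroughZero) fun B hB => mem_image_of_mem _ hB]
  refine dvd_sum fun t ht => ?_
  obtain ⟨B, hB, rfl⟩ := mem_image.mp ht
  obtain ⟨hB𝓑, hB0⟩ := mem_filter.mp hB
  rw [filter_filter, hfiber B hB, card_translatesThroughZero (hfree B hB𝓑 hB0), hcard B hB𝓑]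

theorem exists_mem_coe_eq_stabilizer [Fintype G] (hcard : ∀ B ∈ 𝓑, #B = k)
    (hpair : ∀ x y : G, x ≠ y → ∃! B, B ∈ 𝓑 ∧ x ∈ B ∧ y ∈ B)
    (hreg : ∀ B ∈ 𝓑, ∀ g : G, g +ᵥ B ∈ 𝓑) (hk : ∀ g : G, k • g = 0)
    (hG : 1 < Fintype.card G) : ∃ H ∈ 𝓑, (H : Set G) = stabilizer G H := by
  by_contra! h
  have hfree : ∀ B ∈ 𝓑, (0 : G) ∈ B → stabilizer G B = ⊥ := fun B hB h0 =>
    (stabilizer G B).eq_bot_iff_forall.mpr fun g hg => by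
      by_contra hg0
      exact h B hB (coe_eq_stabilizer_of_ne_zero hpair hreg hB h0 hg hg0)
  obtain ⟨r, hr⟩ := dvd_card_filter_zero_mem hcard hreg hfree
  have hv := card_sub_one_eq_card_filter_mem_mul hcard hpair (0 : G)
  have hp := Nat.minFac_prime hG.ne'
  have hpk := hp.dvd_of_dvd_card_of_forall_nsmul_eq_zero hk (Nat.minFac_dvd _)
  have hpv1 : (Fintype.card G).minFac ∣ Fintype.card G - 1 := by
    rw [hv, hr, mul_assoc]
    exact hpk.mul_right _
  have hp1 := Nat.dvd_sub (Nat.minFac_dvd _) hpv1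
  rw [Nat.sub_sub_self hG.le] at hp1
  exact hp.not_dvd_one hp1

end Design

/-- Necessary conditions for the existence of a `G`-super-regular 2-(v,k,1) design:
(i) the order of every element of `G` divides `k`; (ii) `v ≡ k (mod k(k-1))`;
(iii) `rad v = rad k`; (iv) `k ≢ 2 (mod 4)`. -/
theorem stmt_7 (G : Type*) [AddCommGroup G] [Fintype G] [DecidableEq G] (v k : ℕ)
    (hv : Fintype.card G = v) (hk2 : 2 ≤ k) (hkv : k ≤ v)
    (𝓑 : Finset (Finset G))
    (hcard : ∀ B ∈ 𝓑, B.card = k)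
    (hpair : ∀ x y : G, x ≠ y → ∃! B, B ∈ 𝓑 ∧ x ∈ B ∧ y ∈ B)
    (hreg : ∀ B ∈ 𝓑, ∀ g : G, B.image (· + g) ∈ 𝓑)
    (hzs : ∀ B ∈ 𝓑, ∑ x ∈ B, x = 0) :
    (∀ g : G, k • g = 0) ∧
    v ≡ k [MOD k * (k - 1)] ∧
    (∀ p : ℕ, p.Prime → (p ∣ v ↔ p ∣ k)) ∧
    k % 4 ≠ 2 := by
  subst hv
  have hreg' : ∀ B ∈ 𝓑, ∀ g : G, g +ᵥ B ∈ 𝓑 := fun B hB g =>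
    image_add_right_eq_vadd_finset B g ▸ hreg B hB g
  have hG : 1 < Fintype.card G := by omega
  obtain ⟨g, hg⟩ := Fintype.exists_ne_of_one_lt_card hG 0
  obtain ⟨B, ⟨hB, -⟩, -⟩ := hpair g 0 hg
  have hexp : ∀ g : G, k • g = 0 := hcard B hB ▸ card_nsmul_eq_zero_of_vadd_mem hreg' hzs hB
  obtain ⟨H, hH, hHS⟩ := exists_mem_coe_eq_stabilizer hcard hpair hreg' hexp hG
  have hkG : k ∣ Fintype.card G := by
    rw [← hcard H hH, ← AddSubgroup.natCard_eq_card_of_coe_eq hHS, ← Nat.card_eq_fintype_card]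
    exact (stabilizer G H).card_addSubgroup_dvd_card
  refine ⟨hexp, Nat.modEq_of_dvd_of_sub_one_dvd hkv hkG
      (Dvd.intro_left _ (card_sub_one_eq_card_filter_mem_mul hcard hpair 0).symm),
    fun p hp => ⟨hp.dvd_of_dvd_card_of_forall_nsmul_eq_zero hexp, (·.trans hkG)⟩,
    fun hk4 => AddSubgroup.sum_ne_zero_of_coe_eq hHS (hcard H hH ▸ hk4) (hzs H hH)⟩
end

section
/- Let k ≥ 3, let G be a zero-sum finite abelian group of order k, let p be a prime dividing k, and let q be a power of p with q ≡ 1 (mod k−1). If there exists an additive (G × F_q, G × {0}, k, 1) difference family, then for every integer n ≥ 1 there exists a (G × F_{q^n})-super-regular 2-(k·q^n, k, 1) design. -/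
/-!
Developing the blocks of a relative difference family `𝓕` for `H ≤ Γ` together with `H` itself
gives a linear space on `Γ`: a pair `x ≠ y` with `x - y ∈ H` lies only in the coset `y + H`, and
otherwise `x - y = a - b` for a unique `a, b ∈ B ∈ 𝓕`, which pins down the block `B + (x - a)`.
All translates stay zero-sum because `k • z = 0` on `G × F_{q^n}` (`|G| = k` and `p ∣ k`).

A relative difference family in `G × F_{q^n}` comes from the one in `G × F_q` by embedding
`F_q ↪ F_{q^n}` and multiplying second coordinates by each element `t` of a transversal of
`F_q^×` in `F_{q^n}^×`: every `e ≠ 0` is uniquely `t * f` with `f ∈ F_q^×`, so the differences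
with second coordinate `e` are exactly the `t`-multiples of those with second coordinate `f`.
-/

open Finset

theorem FiniteField.finrank_zmod_eq_of_card_eq_pow {p : ℕ} [Fact p.Prime] {L : Type*} [Field L]
    [Fintype L] [Algebra (ZMod p) L] {e : ℕ} (h : Fintype.card L = p ^ e) :
    Module.finrank (ZMod p) L = e :=
  Nat.pow_right_injective (Fact.out : p.Prime).two_le <| by
    simp only [FiniteField.pow_finrank_eq_card, h]

theorem FiniteField.nonempty_ringHom_of_card_eq_pow {F K : Type*} [Field F] [Fintype F]
    [Field K] [Fintype K] {n : ℕ} (h : Fintype.card K = Fintype.card F ^ n) :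
    Nonempty (F →+* K) := by
  obtain ⟨p, _, m, hp, hF⟩ := FiniteField.card' F
  have : Fact p.Prime := ⟨hp⟩
  have hK : Fintype.card K = p ^ (m * n) := by rw [h, hF, pow_mul]
  have : CharP K p := charP_of_card_eq_prime_pow hK
  let := ZMod.algebra F p
  let := ZMod.algebra K p
  obtain ⟨f⟩ := FiniteField.nonempty_algHom_of_finrank_dvd (F := ZMod p) (K := F) (L := K) <| by
    rw [finrank_zmod_eq_of_card_eq_pow hF, finrank_zmod_eq_of_card_eq_pow hK]
    exact dvd_mul_right _ _
  exact ⟨f⟩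

variable {Γ : Type*} [AddCommGroup Γ]

/-- A `(Γ, H, k, 1)` difference family, with the block size `k` left to separate hypotheses. -/
structure IsRelDiffFamily (H : AddSubgroup Γ) (𝓕 : Finset (Finset Γ)) : Prop where
  exists_sub_eq : ∀ γ ∉ H, ∃ B ∈ 𝓕, ∃ x ∈ B, ∃ y ∈ B, x - y = γ
  sub_inj : ∀ ⦃B B' x y x' y'⦄, B ∈ 𝓕 → B' ∈ 𝓕 → x ∈ B → y ∈ B → x' ∈ B' → y' ∈ B' →
    x - y ∉ H → x - y = x' - y' → B = B' ∧ x = x' ∧ y = y'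
  eq_of_sub_mem : ∀ ⦃B x y⦄, B ∈ 𝓕 → x ∈ B → y ∈ B → x - y ∈ H → x = y

theorem isRelDiffFamily_of_card_filter [DecidableEq Γ] {H : AddSubgroup Γ}
    {𝓕 : Finset (Finset Γ)}
    (h_notMem : ∀ γ ∉ H, ∑ B ∈ 𝓕, #{pr ∈ B ×ˢ B | pr.1 - pr.2 = γ} = 1)
    (h_mem : ∀ γ ∈ H, ∑ B ∈ 𝓕, #{pr ∈ B ×ˢ B | pr.1 ≠ pr.2 ∧ pr.1 - pr.2 = γ} = 0) :
    IsRelDiffFamily H 𝓕 := by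
  set reps : Γ → Finset (Σ _ : Finset Γ, Γ × Γ) :=
    fun γ => 𝓕.sigma fun B => {pr ∈ B ×ˢ B | pr.1 - pr.2 = γ}
  have mem_reps {γ B x y} : (⟨B, (x, y)⟩ : Σ _ : Finset Γ, Γ × Γ) ∈ reps γ ↔
      B ∈ 𝓕 ∧ (x ∈ B ∧ y ∈ B) ∧ x - y = γ := by
    simp only [reps, mem_sigma, mem_filter, mem_product]
  have card_reps : ∀ γ ∉ H, #(reps γ) = 1 := fun γ hγ => by
    rw [card_sigma]; exact h_notMem γ hγ
  refine ⟨fun γ hγ => ?_, fun B B' x y x' y' hB hB' hx hy hx' hy' hH hxy => ?_,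
    fun B x y hB hx hy hH => ?_⟩
  · obtain ⟨⟨B, x, y⟩, hr⟩ := card_eq_one.mp (card_reps γ hγ)
    obtain ⟨hB, ⟨hx, hy⟩, rfl⟩ := mem_reps.mp (hr ▸ mem_singleton_self _)
    exact ⟨B, hB, x, hx, y, hy, rfl⟩
  · have := card_le_one.mp (card_reps _ hH).le _ (mem_reps.mpr ⟨hB, ⟨hx, hy⟩, rfl⟩) _
      (mem_reps.mpr ⟨hB', ⟨hx', hy'⟩, hxy.symm⟩)
    simpa only [Sigma.mk.injEq, heq_eq_eq, Prod.mk.injEq] using this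
  · by_contra hne
    have hempty := card_eq_zero.mp (sum_eq_zero_iff.mp (h_mem _ hH) B hB)
    exact (eq_empty_iff_forall_notMem.mp hempty) (x, y)
      (mem_filter.mpr ⟨mem_product.mpr ⟨hx, hy⟩, hne, rfl⟩)

namespace IsRelDiffFamily

variable {H : AddSubgroup Γ} {𝓕 : Finset (Finset Γ)}

theorem image_homs {Γ' ι : Type*} [AddCommGroup Γ'] [DecidableEq Γ']
    {H' : AddSubgroup Γ'} (hF : IsRelDiffFamily H 𝓕) (I : Finset ι) (μ : ι → Γ →+ Γ')
    (hinj : ∀ i ∈ I, Function.Injective (μ i)) (hcomap : ∀ i ∈ I, H'.comap (μ i) = H)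
    (hcover : ∀ γ' ∉ H', ∃ i ∈ I, ∃ γ, μ i γ = γ')
    (hdisj : ∀ i ∈ I, ∀ j ∈ I, ∀ γ δ, γ ∉ H → μ i γ = μ j δ → i = j) :
    IsRelDiffFamily H' ((I ×ˢ 𝓕).image fun iB => iB.2.image (μ iB.1)) := by
  have mem_H {i} (hi : i ∈ I) (γ : Γ) : μ i γ ∈ H' ↔ γ ∈ H := by
    rw [← AddSubgroup.mem_comap, hcomap i hi]
  refine ⟨fun γ' hγ' => ?_, ?_, ?_⟩
  · obtain ⟨i, hi, γ, rfl⟩ := hcover γ' hγ'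
    obtain ⟨B, hB, x, hx, y, hy, rfl⟩ := hF.exists_sub_eq γ ((mem_H hi γ).not.mp hγ')
    exact ⟨B.image (μ i), mem_image.mpr ⟨(i, B), mem_product.mpr ⟨hi, hB⟩, rfl⟩, μ i x,
      mem_image_of_mem _ hx, μ i y, mem_image_of_mem _ hy, (map_sub _ _ _).symm⟩
  · intro C C' x y x' y' hC hC' hx hy hx' hy'
    obtain ⟨⟨i, B⟩, hiB, rfl⟩ := mem_image.mp hC
    obtain ⟨⟨j, B'⟩, hjB', rfl⟩ := mem_image.mp hC'
    obtain ⟨hi, hB⟩ := mem_product.mp hiB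
    obtain ⟨hj, hB'⟩ := mem_product.mp hjB'
    obtain ⟨a, ha, rfl⟩ := mem_image.mp hx
    obtain ⟨b, hb, rfl⟩ := mem_image.mp hy
    obtain ⟨a', ha', rfl⟩ := mem_image.mp hx'
    obtain ⟨b', hb', rfl⟩ := mem_image.mp hy'
    simp only [← map_sub, mem_H hi]
    intro hab hμ
    obtain rfl := hdisj i hi j hj _ _ hab hμ
    obtain ⟨rfl, rfl, rfl⟩ := hF.sub_inj hB hB' ha hb ha' hb' hab (hinj i hi hμ)
    exact ⟨rfl, rfl, rfl⟩
  · intro C x y hC hx hy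
    obtain ⟨⟨i, B⟩, hiB, rfl⟩ := mem_image.mp hC
    obtain ⟨hi, hB⟩ := mem_product.mp hiB
    obtain ⟨a, ha, rfl⟩ := mem_image.mp hx
    obtain ⟨b, hb, rfl⟩ := mem_image.mp hy
    rw [← map_sub, mem_H hi]
    intro hab
    rw [hF.eq_of_sub_mem hB ha hb hab]

end IsRelDiffFamily

def IsSuperRegularDesign {A : Type*} [AddCommGroup A] [DecidableEq A] (k : ℕ)
    (𝓑 : Finset (Finset A)) : Prop :=
  (∀ B ∈ 𝓑, B.card = k) ∧
    (∀ x y : A, x ≠ y → ∃! B, B ∈ 𝓑 ∧ x ∈ B ∧ y ∈ B) ∧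
    (∀ B ∈ 𝓑, ∀ g : A, B.image (· + g) ∈ 𝓑) ∧
    (∀ B ∈ 𝓑, ∑ x ∈ B, x = 0)

section Development

variable [DecidableEq Γ]

theorem mem_image_add_right_iff {B : Finset Γ} {z x : Γ} : x ∈ B.image (· + z) ↔ x - z ∈ B := by
  simp [image_add_right, sub_eq_add_neg]

variable [Fintype Γ]

def development (𝓑 : Finset (Finset Γ)) : Finset (Finset Γ) :=
  (𝓑 ×ˢ univ).image fun Bz => Bz.1.image (· + Bz.2)

variable {𝓑 : Finset (Finset Γ)} {C : Finset Γ}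

theorem mem_development : C ∈ development 𝓑 ↔ ∃ B ∈ 𝓑, ∃ z, B.image (· + z) = C := by
  simp [development]

theorem image_add_mem_development (hC : C ∈ development 𝓑) (g : Γ) :
    C.image (· + g) ∈ development 𝓑 := by
  obtain ⟨B, hB, z, rfl⟩ := mem_development.mp hC
  refine mem_development.mpr ⟨B, hB, z + g, ?_⟩
  rw [image_image]
  simp only [Function.comp_def, add_assoc]

theorem card_of_mem_development {k : ℕ} (hcard : ∀ B ∈ 𝓑, #B = k) (hC : C ∈ development 𝓑) :
    #C = k := by
  obtain ⟨B, hB, z, rfl⟩ := mem_development.mp hC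
  rw [card_image_of_injective _ (add_left_injective z), hcard B hB]

theorem sum_eq_zero_of_mem_development {k : ℕ} (hcard : ∀ B ∈ 𝓑, #B = k)
    (hsum : ∀ B ∈ 𝓑, ∑ x ∈ B, x = 0) (hexp : ∀ z : Γ, k • z = 0) (hC : C ∈ development 𝓑) :
    ∑ x ∈ C, x = 0 := by
  obtain ⟨B, hB, z, rfl⟩ := mem_development.mp hC
  rw [sum_image (add_left_injective z).injOn, sum_add_distrib, sum_const, hsum B hB, hcard B hB,
    hexp, add_zero]

end Development

namespace IsRelDiffFamily

variable [DecidableEq Γ] [Fintype Γ] {H : AddSubgroup Γ} [DecidablePred (· ∈ H)]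
  {𝓕 : Finset (Finset Γ)}

theorem existsUnique_mem_development (hF : IsRelDiffFamily H 𝓕) {x y : Γ} (hxy : x ≠ y) :
    ∃! C, C ∈ development (insert ({γ | γ ∈ H} : Finset Γ) 𝓕) ∧ x ∈ C ∧ y ∈ C := by
  have mem_translate {z w : Γ} : w ∈ ({γ | γ ∈ H} : Finset Γ).image (· + z) ↔ w - z ∈ H := by
    rw [mem_image_add_right_iff, mem_filter_univ]
  by_cases hH : x - y ∈ H
  · refine ⟨_, ⟨mem_development.mpr ⟨_, mem_insert_self _ _, y, rfl⟩, mem_translate.mpr hH,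
      mem_translate.mpr (by simp)⟩, ?_⟩
    rintro C ⟨hC, hxC, hyC⟩
    obtain ⟨B, hB, z, rfl⟩ := mem_development.mp hC
    rw [mem_image_add_right_iff] at hxC hyC
    rcases mem_insert.mp hB with rfl | hB
    · ext w
      simp only [mem_translate]
      rw [mem_filter_univ] at hyC
      rw [← sub_add_sub_cancel w y z, H.add_mem_cancel_right hyC]
    · exact absurd (sub_left_injective (hF.eq_of_sub_mem hB hxC hyC
        (by rwa [sub_sub_sub_cancel_right]))) hxy
  · obtain ⟨B, hB, a, ha, b, hb, hab⟩ := hF.exists_sub_eq _ hH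
    refine ⟨B.image (· + (x - a)), ⟨mem_development.mpr ⟨B, mem_insert_of_mem hB, _, rfl⟩,
      ?_, ?_⟩, ?_⟩
    · rwa [mem_image_add_right_iff, sub_sub_cancel]
    · have hyb : y - (x - a) = b := by rw [← sub_sub_cancel a b, hab]; abel
      rwa [mem_image_add_right_iff, hyb]
    rintro C ⟨hC, hxC, hyC⟩
    obtain ⟨B', hB', z, rfl⟩ := mem_development.mp hC
    rw [mem_image_add_right_iff] at hxC hyC
    rcases mem_insert.mp hB' with rfl | hB'
    · rw [mem_filter_univ] at hxC hyC
      exact absurd (by simpa using H.sub_mem hxC hyC) hH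
    · obtain ⟨rfl, hxa, -⟩ := hF.sub_inj hB' hB hxC hyC ha hb
        (by rwa [sub_sub_sub_cancel_right]) (by rw [sub_sub_sub_cancel_right, hab])
      rw [← hxa, sub_sub_cancel]

theorem isSuperRegularDesign_development {k : ℕ} (hF : IsRelDiffFamily H 𝓕)
    (hcard : ∀ B ∈ 𝓕, #B = k) (hsum : ∀ B ∈ 𝓕, ∑ x ∈ B, x = 0)
    (hHcard : #({γ | γ ∈ H} : Finset Γ) = k) (hHsum : ∑ x ∈ ({γ | γ ∈ H} : Finset Γ), x = 0)
    (hexp : ∀ z : Γ, k • z = 0) :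
    IsSuperRegularDesign k (development (insert ({γ | γ ∈ H} : Finset Γ) 𝓕)) := by
  have hcard' : ∀ B ∈ insert ({γ | γ ∈ H} : Finset Γ) 𝓕, #B = k :=
    forall_mem_insert _ _ _ |>.mpr ⟨hHcard, hcard⟩
  have hsum' : ∀ B ∈ insert ({γ | γ ∈ H} : Finset Γ) 𝓕, ∑ x ∈ B, x = 0 :=
    forall_mem_insert _ _ _ |>.mpr ⟨hHsum, hsum⟩
  exact ⟨fun _ => card_of_mem_development hcard', fun _ _ => hF.existsUnique_mem_development,
    fun _ => image_add_mem_development, fun _ => sum_eq_zero_of_mem_development hcard' hsum' hexp⟩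

end IsRelDiffFamily

theorem AddMonoidHom.mem_ker_snd {M N : Type*} [AddGroup M] [AddGroup N] {x : M × N} :
    x ∈ (snd M N).ker ↔ x.2 = 0 :=
  Iff.rfl

theorem filter_mem_ker_snd_eq_image {M N : Type*} [AddGroup M] [AddGroup N] [Fintype M]
    [Fintype N] [DecidableEq M] [DecidableEq N] :
    ({x | x ∈ (AddMonoidHom.snd M N).ker} : Finset (M × N)) = univ.image fun g => (g, 0) := by
  ext ⟨g, a⟩
  rw [mem_filter_univ, AddMonoidHom.mem_ker_snd]
  simp [eq_comm]

section Product

variable {G F K : Type*} [AddCommGroup G] [Field F] [Field K]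

def scaleSnd (ψ : F →+* K) (t : K) : G × F →+ G × K :=
  (AddMonoidHom.id G).prodMap ((AddMonoidHom.mulLeft t).comp ψ.toAddMonoidHom)

@[simp]
theorem scaleSnd_apply (ψ : F →+* K) (t : K) (x : G × F) :
    scaleSnd ψ t x = (x.1, t * ψ x.2) :=
  rfl

theorem scaleSnd_injective (ψ : F →+* K) {t : K} (ht : t ≠ 0) :
    Function.Injective (scaleSnd (G := G) ψ t) := fun x y hxy => by
  simp only [scaleSnd_apply, Prod.mk.injEq, mul_right_inj' ht] at hxy
  exact Prod.ext hxy.1 (ψ.injective hxy.2)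

theorem IsRelDiffFamily.image_scaleSnd [DecidableEq G] [DecidableEq K]
    {𝓕 : Finset (Finset (G × F))} (hF : IsRelDiffFamily (AddMonoidHom.snd G F).ker 𝓕)
    (ψ : F →+* K) {S : Set Kˣ}
    (hS : Subgroup.IsComplement S (Units.map ψ.toMonoidHom).range) (hSfin : S.Finite) :
    IsRelDiffFamily (AddMonoidHom.snd G K).ker
      ((hSfin.toFinset ×ˢ 𝓕).image fun tB => tB.2.image (scaleSnd ψ tB.1)) := by
  refine hF.image_homs _ (fun t : Kˣ => scaleSnd ψ t) (fun t _ => scaleSnd_injective ψ t.ne_zero)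
    (fun t _ => ?_) ?_ ?_
  · ext x
    simp only [AddSubgroup.mem_comap, AddMonoidHom.mem_ker_snd, scaleSnd_apply, mul_eq_zero,
      t.ne_zero, false_or, map_eq_zero]
  · rintro ⟨d, e⟩ he
    rw [AddMonoidHom.mem_ker_snd] at he
    obtain ⟨⟨⟨t, ht⟩, ⟨_, f, rfl⟩⟩, htf, -⟩ := hS.existsUnique (Units.mk0 e he)
    refine ⟨t, hSfin.mem_toFinset.mpr ht, (d, f), ?_⟩
    simpa using congrArg Units.val htf
  · intro t ht t' ht' γ δ hγ hγδ
    rw [AddMonoidHom.mem_ker_snd] at hγ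
    simp only [scaleSnd_apply, Prod.mk.injEq] at hγδ
    have hδ : δ.2 ≠ 0 := by
      rintro h
      rw [h, map_zero, mul_zero, mul_eq_zero, map_eq_zero] at hγδ
      exact hγδ.2.elim t.ne_zero hγ
    have := hS.1 (a₁ := (⟨t, hSfin.mem_toFinset.mp ht⟩, ⟨_, Units.mk0 γ.2 hγ, rfl⟩))
      (a₂ := (⟨t', hSfin.mem_toFinset.mp ht'⟩, ⟨_, Units.mk0 δ.2 hδ, rfl⟩)) (Units.ext hγδ.2)
    exact congrArg (fun x => x.1.1) this

end Product

theorem stmt_8_general (k : ℕ)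
    (G : Type) [AddCommGroup G] [Fintype G] [DecidableEq G]
    (hGcard : Fintype.card G = k) (hGzs : ∑ g : G, g = 0)
    (p : ℕ) (hp : p.Prime) (hpk : p ∣ k)
    (q : ℕ) (hq : ∃ m : ℕ, 1 ≤ m ∧ q = p ^ m)
    (F : Type) [Field F] [Fintype F] [DecidableEq F] (hF : Fintype.card F = q)
    (𝓕 : Finset (Finset (G × F)))
    (hFcard : ∀ B ∈ 𝓕, B.card = k)
    (hFzs : ∀ B ∈ 𝓕, ∑ x ∈ B, x = 0)
    (hDF : ∀ γ : G × F,
      (γ.2 ≠ 0 →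
        (∑ B ∈ 𝓕, ((B ×ˢ B).filter (fun pr => pr.1 - pr.2 = γ)).card) = 1) ∧
      (γ.2 = 0 →
        (∑ B ∈ 𝓕, ((B ×ˢ B).filter (fun pr => pr.1 ≠ pr.2 ∧ pr.1 - pr.2 = γ)).card) = 0))
    (n : ℕ)
    (K : Type) [Field K] [Fintype K] [DecidableEq K] (hK : Fintype.card K = q ^ n) :
    ∃ 𝓑 : Finset (Finset (G × K)),
      (∀ B ∈ 𝓑, B.card = k) ∧
      (∀ x y : G × K, x ≠ y → ∃! B, B ∈ 𝓑 ∧ x ∈ B ∧ y ∈ B) ∧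
      (∀ B ∈ 𝓑, ∀ g : G × K, B.image (· + g) ∈ 𝓑) ∧
      (∀ B ∈ 𝓑, ∑ x ∈ B, x = 0) := by
  classical
  obtain ⟨m, -, rfl⟩ := hq
  have : Fact p.Prime := ⟨hp⟩
  have : CharP K p := charP_of_card_eq_prime_pow (f := m * n) (by rw [hK, pow_mul])
  obtain ⟨ψ⟩ := FiniteField.nonempty_ringHom_of_card_eq_pow (F := F) (K := K) (by rw [hK, hF])
  obtain ⟨S, hS, -⟩ := Subgroup.exists_isComplement_left (Units.map ψ.toMonoidHom).range 1
  have hDF' : IsRelDiffFamily (AddMonoidHom.snd G F).ker 𝓕 :=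
    isRelDiffFamily_of_card_filter (fun γ hγ => (hDF γ).1 hγ) (fun γ hγ => (hDF γ).2 hγ)
  have hexp : ∀ z : G × K, k • z = 0 := fun z =>
    Prod.ext (hGcard ▸ card_nsmul_eq_zero)
      (show k • z.2 = 0 by rw [nsmul_eq_mul, (CharP.cast_eq_zero_iff K p k).mpr hpk, zero_mul])
  refine ⟨_, (hDF'.image_scaleSnd ψ hS S.toFinite).isSuperRegularDesign_development
    ?_ ?_ ?_ ?_ hexp⟩
  · simp only [forall_mem_image, mem_product, and_imp, Prod.forall]
    intro t B _ hB
    rw [card_image_of_injective _ (scaleSnd_injective ψ t.ne_zero), hFcard B hB]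
  · simp only [forall_mem_image, mem_product, and_imp, Prod.forall]
    intro t B _ hB
    rw [sum_image (scaleSnd_injective ψ t.ne_zero).injOn, ← map_sum, hFzs B hB, map_zero]
  · rw [filter_mem_ker_snd_eq_image, card_image_of_injective _ (Prod.mk_left_injective 0),
      card_univ, hGcard]
  · rw [filter_mem_ker_snd_eq_image, sum_image (Prod.mk_left_injective 0).injOn]
    simp [Prod.ext_iff, Prod.fst_sum, Prod.snd_sum, hGzs]

/-- If `G` is a zero-sum abelian group of order `k ≥ 3`, `q ≡ 1 (mod k-1)` is a power of a
prime divisor `p` of `k`, and there exists an additive `(G × F_q, G × {0}, k, 1)`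
difference family, then for every `n ≥ 1` there exists a `(G × F_{q^n})`-super-regular
2-(k·qⁿ, k, 1) design. -/
theorem stmt_8 (k : ℕ) (hk : 3 ≤ k)
    (G : Type) [AddCommGroup G] [Fintype G] [DecidableEq G]
    (hGcard : Fintype.card G = k) (hGzs : ∑ g : G, g = 0)
    (p : ℕ) (hp : p.Prime) (hpk : p ∣ k)
    (q : ℕ) (hq : ∃ m : ℕ, 1 ≤ m ∧ q = p ^ m) (hq1 : q ≡ 1 [MOD k - 1])
    (F : Type) [Field F] [Fintype F] [DecidableEq F] (hF : Fintype.card F = q)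
    (𝓕 : Finset (Finset (G × F)))
    (hFcard : ∀ B ∈ 𝓕, B.card = k)
    (hFzs : ∀ B ∈ 𝓕, ∑ x ∈ B, x = 0)
    (hDF : ∀ γ : G × F,
      (γ.2 ≠ 0 →
        (∑ B ∈ 𝓕, ((B ×ˢ B).filter (fun pr => pr.1 - pr.2 = γ)).card) = 1) ∧
      (γ.2 = 0 →
        (∑ B ∈ 𝓕, ((B ×ˢ B).filter (fun pr => pr.1 ≠ pr.2 ∧ pr.1 - pr.2 = γ)).card) = 0))
    (n : ℕ) (hn : 1 ≤ n)
    (K : Type) [Field K] [Fintype K] [DecidableEq K] (hK : Fintype.card K = q ^ n) :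
    ∃ 𝓑 : Finset (Finset (G × K)),
      (∀ B ∈ 𝓑, B.card = k) ∧
      (∀ x y : G × K, x ≠ y → ∃! B, B ∈ 𝓑 ∧ x ∈ B ∧ y ∈ B) ∧
      (∀ B ∈ 𝓑, ∀ g : G × K, B.image (· + g) ∈ 𝓑) ∧
      (∀ B ∈ 𝓑, ∑ x ∈ B, x = 0) :=
  stmt_8_general k G hGcard hGzs p hp hpk q hq F hF 𝓕 hFcard hFzs hDF n K hK
end

section
/- Let k be divisible by 3 but not by 9 (i.e., k ≡ ±3 (mod 9)), let G be a finite abelian group of order v, let H be a subgroup of G of order k, and let 𝓕 be an additive (G,H,k,1) difference family such that the translates of the members of 𝓕 together with the cosets of H form a G-super-regular 2-(v,k,1) design. Then v/k ≡ 1 (mod 3). -/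
/-!
The cosets `H + g` are zero-sum blocks and sum to `k • g`, so `k • g = 0` for every `g`. Write
`k = 3u` with `3 ∤ u`; an element `h ∈ H` of order `3` then has `u • h ≠ 0`, so `h ∉ 3G`, and a
linear functional on the `𝔽₃`-vector space `G / 3G` gives a homomorphism `Λ : G → ℤ/3` with
`Λ h ≠ 0`. Translation by `h` permutes the fibres of `Λ` cyclically, both on `G` and on `H`, so
they have equal sizes.

For a zero-sum block `B` with `3 ∣ |B|`, the number of ordered pairs `(x, y) ∈ B²` with
`Λ (x - y) ≠ 0` is, modulo `3`, `∑ (Λ x - Λ y)² = 2 (|B| ∑ (Λ x)² - (∑ Λ x)²) = 0`. Summing over the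
base blocks counts each `g ∉ H` with `Λ g ≠ 0` once, and there are `2 (v - k) / 3` of them.
Hence `v ≡ k (mod 9)`, that is `v / k ≡ 1 (mod 3)`.
-/

open Finset

section

variable {G : Type*} [AddCommGroup G]

theorem AddSubgroup.exists_mem_nsmul_ne_zero (K : AddSubgroup G) [Finite K] {p m : ℕ}
    [Fact p.Prime] (hp : p ∣ Nat.card K) (hm : ¬ p ∣ m) : ∃ h ∈ K, m • h ≠ 0 := by
  obtain ⟨⟨h, hK⟩, hord⟩ := exists_prime_addOrderOf_dvd_card' p hp
  rw [AddSubgroup.addOrderOf_mk] at hord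
  exact ⟨h, hK, fun hmh => hm (hord ▸ addOrderOf_dvd_of_nsmul_eq_zero hmh)⟩

theorem exists_addMonoidHom_zmod_apply_ne_zero {p m : ℕ} [Fact p.Prime]
    (hexp : ∀ g : G, (p * m) • g = 0) {h : G} (hh : m • h ≠ 0) :
    ∃ Λ : G →+ ZMod p, Λ h ≠ 0 := by
  have hq : ModN.mkQ p h ≠ 0 := by
    rintro hq
    obtain ⟨y, rfl⟩ := (Submodule.Quotient.mk_eq_zero _).1 hq
    apply hh
    simpa [smul_smul, mul_comm] using hexp y
  obtain ⟨φ, hφ⟩ := Module.Projective.exists_dual_ne_zero (ZMod p) hq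
  exact ⟨φ.toAddMonoidHom.comp (ModN.mkQ p), hφ⟩

section Fibres

variable {M : Type*} [AddCommGroup M] [DecidableEq M] (f : G →+ M) {S : Finset G} {t : G}

theorem card_filter_apply_eq_add (hS : ∀ x, x + t ∈ S ↔ x ∈ S) (c : M) :
    #{x ∈ S | f x = c + f t} = #{x ∈ S | f x = c} := by
  refine card_nbij' (· - t) (· + t) ?_ ?_ (fun _ _ => sub_add_cancel _ _)
    (fun _ _ => add_sub_cancel_right _ _)
  · intro x hx
    simp only [coe_filter, Set.mem_ofPred_eq] at hx ⊢
    exact ⟨(hS _).1 (by simpa using hx.1), by rw [map_sub, hx.2, add_sub_cancel_right]⟩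
  · intro x hx
    simp only [coe_filter, Set.mem_ofPred_eq] at hx ⊢
    exact ⟨(hS x).2 hx.1, by rw [map_add, hx.2]⟩

theorem card_filter_apply_eq_nsmul (hS : ∀ x, x + t ∈ S ↔ x ∈ S) (n : ℕ) :
    #{x ∈ S | f x = n • f t} = #{x ∈ S | f x = 0} := by
  induction n with
  | zero => rw [zero_smul]
  | succ n ih => rw [succ_nsmul, card_filter_apply_eq_add f hS, ih]

end Fibres

theorem card_eq_mul_card_filter_apply_eq_zero {p : ℕ} [Fact p.Prime] (f : G →+ ZMod p)
    {S : Finset G} {t : G} (hS : ∀ x, x + t ∈ S ↔ x ∈ S) (ht : f t ≠ 0) :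
    #S = p * #{x ∈ S | f x = 0} := by
  have hfibre (c : ZMod p) : #{x ∈ S | f x = c} = #{x ∈ S | f x = 0} := by
    have hc : c = (c / f t).val • f t := by
      rw [nsmul_eq_mul, ZMod.natCast_zmod_val, div_mul_cancel₀ _ ht]
    rw [hc, card_filter_apply_eq_nsmul f hS]
  rw [card_eq_sum_card_fiberwise (fun x _ => mem_univ (f x)), sum_congr rfl fun c _ => hfibre c,
    sum_const, card_univ, ZMod.card, smul_eq_mul]

theorem Finset.sum_sum_sub_sq {ι R : Type*} [CommRing R] (s : Finset ι) (f : ι → R) :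
    ∑ x ∈ s, ∑ y ∈ s, (f x - f y) ^ 2 = 2 * (#s * ∑ x ∈ s, f x ^ 2 - (∑ x ∈ s, f x) ^ 2) := by
  simp only [sub_sq, sum_add_distrib, sum_sub_distrib, sum_const, ← mul_sum, ← sum_mul,
    nsmul_eq_mul]
  ring

theorem three_dvd_card_filter_apply_sub_ne_zero (Λ : G →+ ZMod 3) {B : Finset G}
    (hB : 3 ∣ #B) (hsum : ∑ x ∈ B, x = 0) :
    3 ∣ #{pr ∈ B ×ˢ B | Λ (pr.1 - pr.2) ≠ 0} := by
  have hsq : ∀ z : ZMod 3, (if z ≠ 0 then 1 else 0) = z ^ 2 := by decide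
  rw [← ZMod.natCast_eq_zero_iff, card_filter, Nat.cast_sum]
  calc ∑ pr ∈ B ×ˢ B, (((if Λ (pr.1 - pr.2) ≠ 0 then 1 else 0 : ℕ)) : ZMod 3)
      = ∑ x ∈ B, ∑ y ∈ B, (Λ x - Λ y) ^ 2 := by
        rw [sum_product]
        simp only [Nat.cast_ite, Nat.cast_one, Nat.cast_zero, hsq, map_sub]
    _ = 2 * (#B * ∑ x ∈ B, Λ x ^ 2 - (∑ x ∈ B, Λ x) ^ 2) := sum_sum_sub_sq B Λ
    _ = 0 := by rw [← map_sum, hsum, map_zero, (ZMod.natCast_eq_zero_iff _ _).2 hB]; ring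

variable [DecidableEq G]

theorem Finset.sum_image_add_right (s : Finset G) (g : G) :
    ∑ x ∈ s.image (· + g), x = ∑ x ∈ s, x + #s • g := by
  rw [sum_image fun x _ y _ => add_right_cancel, sum_add_distrib, sum_const]

theorem card_filter_sub_eq_sum [Fintype G] (B : Finset G) (P : G → Prop) [DecidablePred P] :
    #{pr ∈ B ×ˢ B | P (pr.1 - pr.2)} = ∑ g with P g, #{pr ∈ B ×ˢ B | pr.1 - pr.2 = g} := by
  rw [card_eq_sum_card_fiberwise (f := fun pr => pr.1 - pr.2) (t := univ.filter P)
    fun pr hpr => by simpa using (mem_filter.1 hpr).2]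
  refine sum_congr rfl fun g hg => ?_
  rw [filter_filter]
  refine congrArg card (filter_congr fun pr _ => and_iff_right_of_imp ?_)
  rintro rfl
  simpa using hg

def IsDifferenceFamily (H : Finset G) (𝓕 : Finset (Finset G)) : Prop :=
  ∀ g : G, (g ∉ H → ∑ B ∈ 𝓕, #{pr ∈ B ×ˢ B | pr.1 - pr.2 = g} = 1) ∧
    (g ∈ H → ∑ B ∈ 𝓕, #{pr ∈ B ×ˢ B | pr.1 ≠ pr.2 ∧ pr.1 - pr.2 = g} = 0)

namespace IsDifferenceFamily

variable [Fintype G] {H : Finset G} {𝓕 : Finset (Finset G)}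

theorem sum_card_filter (hDF : IsDifferenceFamily H 𝓕) (P : G → Prop) [DecidablePred P]
    (hP : ¬ P 0) : ∑ B ∈ 𝓕, #{pr ∈ B ×ˢ B | P (pr.1 - pr.2)} = #{g | g ∉ H ∧ P g} := by
  have hP' (g : G) (hg : P g) :
      ∑ B ∈ 𝓕, #{pr ∈ B ×ˢ B | pr.1 - pr.2 = g} = if g ∉ H then 1 else 0 := by
    split_ifs with hgH
    · rw [← (hDF g).2 hgH]
      refine sum_congr rfl fun B _ => congrArg card (filter_congr fun pr _ => ?_)
      refine ⟨fun h => ⟨fun he => hP ?_, h⟩, And.right⟩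
      rw [he, sub_self] at h
      exact h ▸ hg
    · exact (hDF g).1 hgH
  simp_rw [card_filter_sub_eq_sum _ P]
  rw [sum_comm, sum_congr rfl fun g hg => hP' g (mem_filter.1 hg).2, ← card_filter, filter_filter]
  simp_rw [and_comm]

theorem card_modEq_card (hDF : IsDifferenceFamily H 𝓕) (hF : ∀ B ∈ 𝓕, 3 ∣ #B)
    (hFzs : ∀ B ∈ 𝓕, ∑ x ∈ B, x = 0) (Λ : G →+ ZMod 3) {h : G}
    (hHh : ∀ x, x + h ∈ H ↔ x ∈ H) (hΛ : Λ h ≠ 0) :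
    Fintype.card G ≡ #H [MOD 9] := by
  have : Fact (Nat.Prime 3) := ⟨Nat.prime_three⟩
  have hzG := card_eq_mul_card_filter_apply_eq_zero Λ (S := univ) (by simp) hΛ
  have hzH := card_eq_mul_card_filter_apply_eq_zero Λ hHh hΛ
  obtain ⟨t, ht⟩ : 3 ∣ #{g | g ∉ H ∧ Λ g ≠ 0} := by
    rw [← hDF.sum_card_filter (Λ · ≠ 0) (by simp)]
    exact dvd_sum fun B hB => three_dvd_card_filter_apply_sub_ne_zero Λ (hF B hB) (hFzs B hB)
  have hsplit : #{g | Λ g ≠ 0} = #{g | g ∉ H ∧ Λ g ≠ 0} + #{g ∈ H | Λ g ≠ 0} := by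
    rw [← card_filter_add_card_filter_not (s := {g | Λ g ≠ 0}) (p := (· ∈ H)), add_comm]
    congr 1 <;> congr 1 <;> ext <;> simp [and_comm]
  have hG := card_filter_add_card_filter_not (s := univ) (p := fun g => Λ g = 0)
  have hH := card_filter_add_card_filter_not (s := H) (p := fun g => Λ g = 0)
  simp only [← ne_eq, card_univ] at hzG hG hH
  unfold Nat.ModEq
  omega

end IsDifferenceFamily

end

theorem Nat.modEq_one_of_mul_modEq {k q : ℕ} (h : k * q ≡ k [MOD 9]) (h3k : 3 ∣ k)
    (h9k : ¬ 9 ∣ k) : q ≡ 1 [MOD 3] := by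
  obtain ⟨u, rfl⟩ := h3k
  have hu : ¬ 3 ∣ u := fun ⟨w, hw⟩ => h9k ⟨w, by omega⟩
  refine Nat.ModEq.cancel_left_of_coprime ((Nat.Prime.coprime_iff_not_dvd Nat.prime_three).2 hu) ?_
  exact Nat.ModEq.mul_left_cancel' three_ne_zero (by simpa [mul_assoc] using h)

/-- If `k ≡ ±3 (mod 9)` (i.e. `3 ∣ k`, `9 ∤ k`) and a `G`-super-regular 2-(v,k,1) design
is generated by an additive `(G,H,k,1)` difference family (the blocks being the translates
of the base blocks together with the cosets of `H`), then `v/k ≡ 1 (mod 3)`. -/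
theorem stmt_9 (G : Type*) [AddCommGroup G] [Fintype G] [DecidableEq G] (v k : ℕ)
    (hv : Fintype.card G = v) (h3k : 3 ∣ k) (h9k : ¬ 9 ∣ k)
    (H : Finset G) (hH0 : (0 : G) ∈ H)
    (hHadd : ∀ a ∈ H, ∀ b ∈ H, a + b ∈ H) (hHneg : ∀ a ∈ H, -a ∈ H)
    (hHcard : H.card = k) (hHzs : ∑ x ∈ H, x = 0)
    (𝓕 : Finset (Finset G))
    (hFcard : ∀ B ∈ 𝓕, B.card = k)
    (hFzs : ∀ B ∈ 𝓕, ∑ x ∈ B, x = 0)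
    (hDF : ∀ g : G,
      (g ∉ H →
        (∑ B ∈ 𝓕, ((B ×ˢ B).filter (fun pr => pr.1 - pr.2 = g)).card) = 1) ∧
      (g ∈ H →
        (∑ B ∈ 𝓕, ((B ×ˢ B).filter (fun pr => pr.1 ≠ pr.2 ∧ pr.1 - pr.2 = g)).card) = 0)) :
    let 𝓑 := ((𝓕 ×ˢ (Finset.univ : Finset G)).image (fun pr => pr.1.image (· + pr.2))) ∪
      ((Finset.univ : Finset G).image (fun g => H.image (· + g)));
    ((∀ x y : G, x ≠ y → ∃! B, B ∈ 𝓑 ∧ x ∈ B ∧ y ∈ B) ∧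
     (∀ B ∈ 𝓑, ∀ g : G, B.image (· + g) ∈ 𝓑) ∧
     (∀ B ∈ 𝓑, ∑ x ∈ B, x = 0)) →
    v / k ≡ 1 [MOD 3] := by
  rintro 𝓑 ⟨-, -, hzs𝓑⟩
  have hexp (g : G) : k • g = 0 := by
    have := hzs𝓑 (H.image (· + g)) (mem_union_right _ (mem_image_of_mem _ (mem_univ g)))
    rwa [sum_image_add_right, hHzs, zero_add, hHcard] at this
  let K : AddSubgroup G :=
    { carrier := H
      add_mem' := fun ha hb => hHadd _ ha _ hb
      zero_mem' := hH0
      neg_mem' := fun ha => hHneg _ ha }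
  have hK : Nat.card K = k := by simp [K, hHcard]
  have : Fact (Nat.Prime 3) := ⟨Nat.prime_three⟩
  obtain ⟨u, rfl⟩ := id h3k
  obtain ⟨h, hhK, hh⟩ := K.exists_mem_nsmul_ne_zero (m := u) (hK ▸ h3k)
    (fun ⟨w, hw⟩ => h9k ⟨w, by omega⟩)
  obtain ⟨Λ, hΛ⟩ := exists_addMonoidHom_zmod_apply_ne_zero hexp hh
  have h9 := IsDifferenceFamily.card_modEq_card hDF (fun B hB => hFcard B hB ▸ h3k) hFzs Λ
    (fun x => K.add_mem_cancel_right hhK) hΛ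
  obtain ⟨q, rfl⟩ : 3 * u ∣ v := by
    rw [← hv, ← hK, ← Nat.card_eq_fintype_card]
    exact K.card_addSubgroup_dvd_card
  rw [Nat.mul_div_cancel_left q (by omega)]
  exact Nat.modEq_one_of_mul_modEq (by rwa [hv, hHcard] at h9) h3k h9k
end

section
/- There is no G-super-regular 2-(v,k,1) design with k divisible by 3 but not by 9 and with v/k ≡ 2 (mod 3): if G is a finite abelian group of order v, k divides v, 3 | k, 9 ∤ k and v/k ≡ 2 (mod 3), then no set of k-element subsets of G that is closed under translation, has all blocks zero-sum, and contains every pair of distinct elements of G in exactly one block can exist. -/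
/-!
Since `3 ∥ |G|`, there are a homomorphism `φ : G → ℤ/3` and an element `u` of order 3 with
`φ u = 1`. Let `c_i(B)` be the number of points of a block `B` in the fibre `φ⁻¹(i)`. For a
zero-sum block of size `k ≡ 0 (mod 3)` we get `c₀ ≡ c₁ ≡ c₂ (mod 3)`, so `c₁` and `c₁ c₂` are,
mod 3, invariant under translation by `u`. This translation permutes the blocks with period 3,
so in a sum over all blocks only the `N` blocks it fixes survive mod 3, and for those
`c₀ = c₁ = c₂ = k/3`. Counting flags (every point lies on `(v-1)/(k-1) ≡ 1` blocks) and pairs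
gives `∑ c₁ ≡ |φ⁻¹(1)| = v/3` and `∑ c₁ c₂ = (v/3)²`. With `v/3 ≡ 2·k/3` and `3 ∤ k/3` this
says `N ≡ 2` and `N ≡ 1 (mod 3)`.
-/

open Finset

section PeriodThree

variable {α M : Type*} [DecidableEq α] [AddCommMonoid M] {σ : α → α} {f : α → M}

theorem sum_eq_zero_of_period_three_of_forall_ne (hM : ∀ m : M, 3 • m = 0) (s : Finset α)
    (hs : ∀ x ∈ s, σ x ∈ s) (hσ : ∀ x ∈ s, σ (σ (σ x)) = x) (hfix : ∀ x ∈ s, σ x ≠ x)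
    (hf : ∀ x ∈ s, f (σ x) = f x) : ∑ x ∈ s, f x = 0 := by
  induction s using Finset.strongInduction with
  | H s ih =>
  obtain rfl | ⟨x, hx⟩ := s.eq_empty_or_nonempty
  · exact sum_empty
  have hx3 : σ (σ (σ x)) = x := hσ x hx
  have hne01 : x ≠ σ x := (hfix x hx).symm
  have hne02 : x ≠ σ (σ x) := fun h => hfix x hx (by simpa [hx3] using congrArg σ h)
  have hne12 : σ x ≠ σ (σ x) := fun h => hne02 (by simpa [hx3] using (congrArg σ h).symm)
  set O : Finset α := {x, σ x, σ (σ x)}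
  have hOs : O ⊆ s := by
    simp only [O, insert_subset_iff, singleton_subset_iff]
    exact ⟨hx, hs x hx, hs _ (hs x hx)⟩
  have hsumO : ∑ y ∈ O, f y = 0 := by
    rw [sum_insert (by simp [hne01, hne02]), sum_pair hne12, hf _ (hs x hx), hf x hx,
      ← hM (f x), succ_nsmul, two_nsmul, add_assoc]
  have hOclosed : ∀ y ∈ s, σ y ∈ O → y ∈ O := by
    intro y hy hσy
    have hy3 := hσ y hy
    simp only [O, mem_insert, mem_singleton] at hσy ⊢
    rcases hσy with h | h | h <;> rw [h] at hy3 <;> simp [← hy3, hx3]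
  rw [← sum_sdiff hOs, hsumO, add_zero]
  refine ih _ (sdiff_ssubset hOs (by simp [O])) ?_ (fun y hy => hσ y (mem_sdiff.1 hy).1)
    (fun y hy => hfix y (mem_sdiff.1 hy).1) (fun y hy => hf y (mem_sdiff.1 hy).1)
  intro y hy
  rw [mem_sdiff] at hy ⊢
  exact ⟨hs y hy.1, fun h => hy.2 (hOclosed y hy.1 h)⟩

theorem sum_eq_sum_filter_of_period_three (hM : ∀ m : M, 3 • m = 0) (s : Finset α)
    (hs : ∀ x ∈ s, σ x ∈ s) (hσ : ∀ x ∈ s, σ (σ (σ x)) = x) (hf : ∀ x ∈ s, f (σ x) = f x) :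
    ∑ x ∈ s, f x = ∑ x ∈ s with σ x = x, f x := by
  have hmoved : ∑ x ∈ s with σ x ≠ x, f x = 0 := by
    refine sum_eq_zero_of_period_three_of_forall_ne (σ := σ) hM _ ?_ ?_ ?_ ?_ <;>
      simp only [mem_filter]
    · refine fun x hx => ⟨hs x hx.1, fun h => hx.2 ?_⟩
      have h3 := congrArg σ h
      rw [hσ x hx.1, h] at h3
      exact h3.symm
    · exact fun x hx => hσ x hx.1
    · exact fun x hx => hx.2
    · exact fun x hx => hf x hx.1
  rw [← sum_filter_add_sum_filter_not s (fun x => σ x = x), hmoved, add_zero]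

end PeriodThree

theorem exists_addMonoidHom_zmod_apply_eq_one {G : Type*} [AddCommGroup G] [Fintype G]
    (p : ℕ) [Fact p.Prime] (hp : p ∣ Fintype.card G) (hp2 : ¬ p ^ 2 ∣ Fintype.card G) :
    ∃ (φ : G →+ ZMod p) (u : G), p • u = 0 ∧ φ u = 1 := by
  obtain ⟨u, hu⟩ := exists_prime_addOrderOf_dvd_card p hp
  obtain ⟨m, hm⟩ := hp
  -- `m • ·` maps `G` into its `p`-torsion, an `𝔽_p`-vector space, and `m • u ≠ 0` as `p ∤ m`.
  let _ := AddSubgroup.torsionBy.zmodModule (A := G) (n := p)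
  let ψ : G →+ AddSubgroup.torsionBy G p := (nsmulAddMonoidHom m).codRestrict _ fun x => by
    rw [AddSubgroup.torsionBy.nsmul_iff, nsmulAddMonoidHom_apply, smul_smul, ← hm,
      card_nsmul_eq_zero]
  have hψu : ψ u ≠ 0 := by
    intro h
    have hdvd : p ∣ m := hu ▸ addOrderOf_dvd_of_nsmul_eq_zero (congrArg Subtype.val h)
    rw [hm, pow_two] at hp2
    exact hp2 (mul_dvd_mul_left p hdvd)
  obtain ⟨f, hf⟩ := Module.Projective.exists_dual_eq_one (ZMod p) hψu
  exact ⟨f.toAddMonoidHom.comp ψ, u, hu ▸ addOrderOf_nsmul_eq_zero u, hf⟩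

section LinearSpace

variable {α : Type*} [DecidableEq α] {𝓑 : Finset (Finset α)}

theorem sum_card_inter_mul_card_inter (h𝓑 : ∀ x y : α, x ≠ y → ∃! B, B ∈ 𝓑 ∧ x ∈ B ∧ y ∈ B)
    {S T : Finset α} (hST : Disjoint S T) :
    ∑ B ∈ 𝓑, #(B ∩ S) * #(B ∩ T) = #S * #T := by
  let r : Finset α → α × α → Prop := fun B p => p.1 ∈ B ∧ p.2 ∈ B
  have habove : ∀ B, (S ×ˢ T).bipartiteAbove r B = (B ∩ S) ×ˢ (B ∩ T) := by
    intro B; ext ⟨x, y⟩; simp only [bipartiteAbove, r, mem_filter, mem_product, mem_inter]; tauto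
  have hbelow : ∀ p ∈ S ×ˢ T, #(𝓑.bipartiteBelow r p) = 1 := by
    rintro ⟨x, y⟩ hp
    rw [mem_product] at hp
    have hxy : x ≠ y := fun h => disjoint_left.1 hST hp.1 (h ▸ hp.2)
    simpa [card_eq_one_iff_existsUnique, bipartiteBelow, r] using h𝓑 x y hxy
  simp_rw [← card_product, ← habove, sum_card_bipartiteAbove_eq_sum_card_bipartiteBelow,
    sum_congr rfl hbelow, card_eq_sum_ones]

theorem card_filter_mem_mul_sub_one [Fintype α]
    (h𝓑 : ∀ x y : α, x ≠ y → ∃! B, B ∈ 𝓑 ∧ x ∈ B ∧ y ∈ B) {k : ℕ} (hk : ∀ B ∈ 𝓑, #B = k)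
    (x : α) : #{B ∈ 𝓑 | x ∈ B} * (k - 1) = Fintype.card α - 1 := by
  have h := sum_card_inter_mul_card_inter h𝓑 (disjoint_singleton_left.2 (notMem_erase x univ))
  rw [card_singleton, one_mul, card_erase_of_mem (mem_univ x), card_univ] at h
  rw [← h, card_eq_sum_ones, sum_mul, one_mul, sum_filter]
  refine sum_congr rfl fun B hB => ?_
  split_ifs with hx
  · rw [inter_singleton_of_mem hx, card_singleton, one_mul, inter_erase, inter_univ,
      card_erase_of_mem hx, hk B hB]
  · rw [inter_singleton_of_notMem hx, card_empty, zero_mul]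

theorem sum_card_inter_mul_sub_one [Fintype α]
    (h𝓑 : ∀ x y : α, x ≠ y → ∃! B, B ∈ 𝓑 ∧ x ∈ B ∧ y ∈ B) {k : ℕ} (hk : ∀ B ∈ 𝓑, #B = k)
    (S : Finset α) : (∑ B ∈ 𝓑, #(B ∩ S)) * (k - 1) = #S * (Fintype.card α - 1) := by
  have hswap : ∑ B ∈ 𝓑, #(B ∩ S) = ∑ x ∈ S, #{B ∈ 𝓑 | x ∈ B} := by
    simpa [bipartiteAbove, bipartiteBelow, filter_mem_eq_inter, inter_comm] using
      sum_card_bipartiteAbove_eq_sum_card_bipartiteBelow (s := 𝓑) (t := S) (fun B x => x ∈ B)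
  rw [hswap, sum_mul, sum_congr rfl fun x _ => card_filter_mem_mul_sub_one h𝓑 hk x, sum_const,
    smul_eq_mul]

theorem natCast_sum_card_inter_eq_card [Fintype α] [Nonempty α]
    (h𝓑 : ∀ x y : α, x ≠ y → ∃! B, B ∈ 𝓑 ∧ x ∈ B ∧ y ∈ B) {k : ℕ} (hk : ∀ B ∈ 𝓑, #B = k)
    (hk0 : k ≠ 0) (hk3 : 3 ∣ k) (hα : 3 ∣ Fintype.card α) (S : Finset α) :
    ((∑ B ∈ 𝓑, #(B ∩ S) : ℕ) : ZMod 3) = #S := by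
  have h := congrArg (Nat.cast : ℕ → ZMod 3) (sum_card_inter_mul_sub_one h𝓑 hk S)
  rw [Nat.cast_mul, Nat.cast_mul, Nat.cast_pred (Nat.pos_of_ne_zero hk0),
    Nat.cast_pred Fintype.card_pos, (ZMod.natCast_eq_zero_iff _ _).2 hk3,
    (ZMod.natCast_eq_zero_iff _ _).2 hα] at h
  simpa using h

end LinearSpace

theorem ZMod.sum_univ_three {M : Type*} [AddCommMonoid M] (f : ZMod 3 → M) :
    ∑ i, f i = f 0 + f 1 + f 2 :=
  Fin.sum_univ_three f

section Fibres

variable {G H : Type*} [AddCommGroup G] [AddCommGroup H] [DecidableEq H]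

theorem card_filter_image_add [DecidableEq G] (φ : G →+ H) (B : Finset G) (g : G) (i : H) :
    #{x ∈ B.image (· + g) | φ x = i} = #{x ∈ B | φ x = i - φ g} := by
  rw [filter_image, card_image_of_injective _ (add_left_injective g)]
  congr 1
  refine filter_congr fun x _ => ?_
  rw [map_add, eq_sub_iff_add_eq]

theorem card_eq_sum_card_filter_zmod_three (φ : G →+ ZMod 3) (B : Finset G) :
    #B = #{x ∈ B | φ x = 0} + #{x ∈ B | φ x = 1} + #{x ∈ B | φ x = 2} :=
  (card_eq_sum_card_fiberwise fun x _ => mem_univ (φ x)).trans (ZMod.sum_univ_three _)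

theorem natCast_card_filter_eq_of_sum_eq_zero (φ : G →+ ZMod 3) {B : Finset G}
    (hB : ∑ x ∈ B, φ x = 0) (h3 : (#B : ZMod 3) = 0) (i : ZMod 3) :
    (#{x ∈ B | φ x = i} : ZMod 3) = #{x ∈ B | φ x = 0} := by
  have hsum : (#{x ∈ B | φ x = 1} : ZMod 3) + #{x ∈ B | φ x = 2} * 2 = 0 := by
    have := (sum_fiberwise' B φ id).trans hB
    simp only [id, sum_const, nsmul_eq_mul, ZMod.sum_univ_three] at this
    simpa using this
  have hcard := congrArg (Nat.cast : ℕ → ZMod 3) (card_eq_sum_card_filter_zmod_three φ B)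
  push_cast at hcard
  rw [h3] at hcard
  have hsolve : ∀ a b c : ZMod 3, 0 = a + b + c → b + c * 2 = 0 → b = a ∧ c = a := by decide
  obtain ⟨h1, h2⟩ := hsolve _ _ _ hcard hsum
  obtain rfl | rfl | rfl : i = 0 ∨ i = 1 ∨ i = 2 := by decide +revert
  exacts [rfl, h1, h2]

theorem three_mul_card_filter_of_image_add_eq [DecidableEq G] (φ : G →+ ZMod 3) {B : Finset G}
    {u : G} (hu : φ u = 1) (hB : B.image (· + u) = B) (i : ZMod 3) :
    3 * #{x ∈ B | φ x = i} = #B := by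
  have hshift : ∀ j, #{x ∈ B | φ x = j} = #{x ∈ B | φ x = j - 1} := fun j => by
    conv_lhs => rw [← hB]
    rw [card_filter_image_add, hu]
  have h0 : #{x ∈ B | φ x = 0} = #{x ∈ B | φ x = 2} := hshift 0
  have h1 : #{x ∈ B | φ x = 1} = #{x ∈ B | φ x = 0} := hshift 1
  rw [card_eq_sum_card_filter_zmod_three φ B]
  obtain rfl | rfl | rfl : i = 0 ∨ i = 1 ∨ i = 2 := by decide +revert
  all_goals omega

end Fibres

section SuperRegular

variable {G : Type*} [AddCommGroup G] [DecidableEq G]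

theorem image_add_image_add_image_add {u : G} (hu : 3 • u = 0) (B : Finset G) :
    ((B.image (· + u)).image (· + u)).image (· + u) = B := by
  rw [image_image, image_image]
  convert image_id (s := B)
  ext x
  simp only [Function.comp_apply, id, add_assoc, ← two_nsmul, ← succ_nsmul, hu, add_zero]

def fixedBlocks (𝓑 : Finset (Finset G)) (u : G) : Finset (Finset G) :=
  {B ∈ 𝓑 | B.image (· + u) = B}

theorem sum_eq_card_fixedBlocks_nsmul {M : Type*} [AddCommMonoid M]
    (hM : ∀ m : M, 3 • m = 0) {φ : G →+ ZMod 3} {u : G} (hu : 3 • u = 0) (hφu : φ u = 1)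
    {𝓑 : Finset (Finset G)} {a : ℕ} (hcard : ∀ B ∈ 𝓑, #B = 3 * a)
    (htrans : ∀ B ∈ 𝓑, B.image (· + u) ∈ 𝓑) (hzero : ∀ B ∈ 𝓑, ∑ x ∈ B, x = 0)
    (w : ZMod 3 → ZMod 3 → M) :
    ∑ B ∈ 𝓑, w #{x ∈ B | φ x = 1} #{x ∈ B | φ x = 2} =
      #(fixedBlocks 𝓑 u) • w a a := by
  have hcong : ∀ B ∈ 𝓑, ∀ i, (#{x ∈ B | φ x = i} : ZMod 3) = #{x ∈ B | φ x = 0} :=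
    fun B hB => natCast_card_filter_eq_of_sum_eq_zero φ (by rw [← map_sum, hzero B hB, map_zero])
      (by rw [hcard B hB, Nat.cast_mul, ZMod.natCast_self, zero_mul])
  have hinv : ∀ B ∈ 𝓑, ∀ i, (#{x ∈ B.image (· + u) | φ x = i} : ZMod 3) = #{x ∈ B | φ x = i} :=
    fun B hB i => by rw [card_filter_image_add, hcong B hB, hcong B hB i]
  unfold fixedBlocks
  rw [sum_eq_sum_filter_of_period_three hM 𝓑 htrans
    (fun B _ => image_add_image_add_image_add hu B) (fun B hB => by simp only [hinv B hB]),
    sum_congr rfl fun B hB => ?_, sum_const]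
  rw [mem_filter] at hB
  have hfix : ∀ i, #{x ∈ B | φ x = i} = a := fun i => by
    have := three_mul_card_filter_of_image_add_eq φ hφu hB.2 i
    rw [hcard B hB.1] at this
    omega
  rw [hfix, hfix]

theorem natCast_card_fixedBlocks_mul_eq [Fintype G] {φ : G →+ ZMod 3} {u : G} (hu : 3 • u = 0)
    (hφu : φ u = 1) {𝓑 : Finset (Finset G)} {a : ℕ} (ha : a ≠ 0) (hcard : ∀ B ∈ 𝓑, #B = 3 * a)
    (hpair : ∀ x y : G, x ≠ y → ∃! B, B ∈ 𝓑 ∧ x ∈ B ∧ y ∈ B)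
    (htrans : ∀ B ∈ 𝓑, B.image (· + u) ∈ 𝓑) (hzero : ∀ B ∈ 𝓑, ∑ x ∈ B, x = 0)
    (hG : 3 ∣ Fintype.card G) :
    (#(fixedBlocks 𝓑 u) : ZMod 3) * a = #{x | φ x = 1} ∧
      (#(fixedBlocks 𝓑 u) : ZMod 3) * (a * a) = #{x | φ x = 1} * #{x | φ x = 2} := by
  have hZ3 : ∀ x : ZMod 3, 3 • x = 0 := fun x => by rw [nsmul_eq_mul, ZMod.natCast_self, zero_mul]
  have hfibre : ∀ (B : Finset G) i, B ∩ ({x | φ x = i} : Finset G) = {x ∈ B | φ x = i} :=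
    fun B i => by rw [inter_filter, inter_univ]
  have hflags := natCast_sum_card_inter_eq_card hpair hcard (by omega) (dvd_mul_right 3 a) hG
    {x | φ x = 1}
  have hpairs := sum_card_inter_mul_card_inter hpair (S := {x | φ x = 1}) (T := {x | φ x = 2})
    (disjoint_filter.2 fun x _ h1 h2 => absurd (h1.symm.trans h2) (by decide))
  simp only [hfibre] at hflags hpairs
  have hsum := sum_eq_card_fixedBlocks_nsmul hZ3 hu hφu hcard htrans hzero
  constructor
  · rw [← nsmul_eq_mul, ← hsum fun x _ => x, ← hflags, Nat.cast_sum]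
  · rw [← nsmul_eq_mul, ← hsum (· * ·), ← Nat.cast_mul, ← hpairs]
    push_cast
    rfl

end SuperRegular

theorem stmt_10_general (G : Type*) [AddCommGroup G] [Fintype G] [DecidableEq G] (v k : ℕ)
    (hv : Fintype.card G = v) (hkv : k ∣ v)
    (h3 : 3 ∣ k) (h9 : ¬ 9 ∣ k) (hvk : v / k ≡ 2 [MOD 3]) :
    ¬ ∃ 𝓑 : Finset (Finset G),
        (∀ B ∈ 𝓑, B.card = k) ∧
        (∀ x y : G, x ≠ y → ∃! B, B ∈ 𝓑 ∧ x ∈ B ∧ y ∈ B) ∧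
        (∀ B ∈ 𝓑, ∀ g : G, B.image (· + g) ∈ 𝓑) ∧
        (∀ B ∈ 𝓑, ∑ x ∈ B, x = 0) := by
  rintro ⟨𝓑, hcard, hpair, htrans, hzero⟩
  obtain ⟨a, rfl⟩ := h3
  obtain ⟨m, rfl⟩ := hkv
  rw [Nat.mul_div_cancel_left m (by omega)] at hvk
  have ha : ¬ 3 ∣ a := fun h => h9 (by simpa using mul_dvd_mul_left 3 h)
  have hm : ¬ 3 ∣ m := by rw [Nat.ModEq] at hvk; omega
  have hG : Fintype.card G = 3 * (a * m) := by rw [hv, mul_assoc]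
  obtain ⟨φ, u, hu, hφu⟩ := exists_addMonoidHom_zmod_apply_eq_one 3 (hG ▸ dvd_mul_right _ _)
    (by rw [hG, pow_two, Nat.mul_dvd_mul_iff_left three_pos]
        exact Nat.Prime.not_dvd_mul Nat.prime_three ha hm)
  have hfibre : ∀ i, #{x | φ x = i} = a * m := fun i => by
    have := three_mul_card_filter_of_image_add_eq φ hφu
      (image_univ_of_surjective (add_right_surjective u)) i
    rw [card_univ, hG] at this
    omega
  obtain ⟨h1, h2⟩ := natCast_card_fixedBlocks_mul_eq hu hφu (by omega) hcard hpair
    (fun B hB => htrans B hB u) hzero (hG ▸ dvd_mul_right _ _)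
  simp only [hfibre, Nat.cast_mul] at h1 h2
  have hsolve : ∀ N x y : ZMod 3, x ≠ 0 → y = 2 → N * x = x * y →
      N * (x * x) = x * y * (x * y) → False := by decide
  exact hsolve _ a m (mt (ZMod.natCast_eq_zero_iff a 3).1 ha)
    (by simpa using (ZMod.natCast_eq_natCast_iff m 2 3).2 hvk) h1 h2

/-- No `G`-super-regular 2-(v,k,1) design exists when `3 ∣ k`, `9 ∤ k` and
`v/k ≡ 2 (mod 3)`. -/
theorem stmt_10 (G : Type*) [AddCommGroup G] [Fintype G] [DecidableEq G] (v k : ℕ)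
    (hv : Fintype.card G = v) (hk2 : 2 ≤ k) (hkv : k ∣ v)
    (h3 : 3 ∣ k) (h9 : ¬ 9 ∣ k) (hvk : v / k ≡ 2 [MOD 3]) :
    ¬ ∃ 𝓑 : Finset (Finset G),
        (∀ B ∈ 𝓑, B.card = k) ∧
        (∀ x y : G, x ≠ y → ∃! B, B ∈ 𝓑 ∧ x ∈ B ∧ y ∈ B) ∧
        (∀ B ∈ 𝓑, ∀ g : G, B.image (· + g) ∈ 𝓑) ∧
        (∀ B ∈ 𝓑, ∑ x ∈ B, x = 0) :=
  stmt_10_general G v k hv hkv h3 h9 hvk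
end

section
/- If there exists an additive (G,k,λ) strong difference family on a finite abelian group G and an additive (H,k,μ) difference matrix over a finite abelian group H, then there exists an additive (G × H, k, λμ) strong difference family. -/
/-!
Take as blocks `(B_a i, M i c)` for every block `B_a` of the family and every column `c` of the
matrix. A difference `(g, h)` arises from a pair of positions `i ≠ j` of `B_a` with
`B_a i - B_a j = g` together with a column `c` with `M i c - M j c = h`; for each such pair exactly
`μ` columns qualify, so every `(g, h)` is covered `λμ` times. Blocks and columns sum to zero, hence
so do the new blocks.
-/

open Finset

section DifferenceCount

variable {ι A : Type*} [Fintype ι] [DecidableEq ι] [AddGroup A] [DecidableEq A]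

def diffCount (b : ι → A) (g : A) : ℕ :=
  #{p : ι × ι | p.1 ≠ p.2 ∧ b p.1 - b p.2 = g}

theorem sum_diffCount_prod_column {G H τ : Type*} [AddGroup G] [DecidableEq G]
    [AddGroup H] [DecidableEq H] [Fintype τ] (x : ι → G) (M : ι → τ → H) {mu : ℕ}
    (hM : ∀ r t : ι, r ≠ t → ∀ h : H, #{c | M r c - M t c = h} = mu) (g : G × H) :
    ∑ c, diffCount (fun i => (x i, M i c)) g = diffCount x g.1 * mu := by
  set D := ({p : ι × ι | p.1 ≠ p.2 ∧ x p.1 - x p.2 = g.1} : Finset (ι × ι))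
  calc ∑ c, diffCount (fun i => (x i, M i c)) g
      = ∑ c, #{p ∈ D | M p.1 c - M p.2 c = g.2} := by
        simp only [D, diffCount, filter_filter, Prod.ext_iff, Prod.fst_sub, Prod.snd_sub, and_assoc]
    _ = ∑ p ∈ D, #{c | M p.1 c - M p.2 c = g.2} :=
        sum_card_bipartiteAbove_eq_sum_card_bipartiteBelow _
    _ = ∑ _p ∈ D, mu := sum_congr rfl fun p hp => hM p.1 p.2 (mem_filter.1 hp).2.1 g.2
    _ = diffCount x g.1 * mu := by rw [sum_const, smul_eq_mul, diffCount]

end DifferenceCount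

theorem stmt_16_general (G H : Type*) [AddCommGroup G] [DecidableEq G]
    [AddCommGroup H] [Fintype H] [DecidableEq H]
    (k lam mu : ℕ)
    (s : ℕ) (B : Fin s → Fin k → G)
    (hSDF : ∀ g : G,
      (∑ h : Fin s, ((Finset.univ : Finset (Fin k × Fin k)).filter
        (fun p => p.1 ≠ p.2 ∧ B h p.1 - B h p.2 = g)).card) = lam)
    (hBadd : ∀ h : Fin s, ∑ i : Fin k, B h i = 0)
    (M : Fin k → Fin (mu * Fintype.card H) → H)
    (hDM : ∀ r t : Fin k, r ≠ t → ∀ h : H,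
      ((Finset.univ : Finset (Fin (mu * Fintype.card H))).filter
        (fun c => M r c - M t c = h)).card = mu)
    (hMadd : ∀ c : Fin (mu * Fintype.card H), ∑ r : Fin k, M r c = 0) :
    ∃ (s' : ℕ) (C : Fin s' → Fin k → G × H),
      (∀ g : G × H,
        (∑ h : Fin s', ((Finset.univ : Finset (Fin k × Fin k)).filter
          (fun p => p.1 ≠ p.2 ∧ C h p.1 - C h p.2 = g)).card) = lam * mu) ∧
      (∀ h : Fin s', ∑ i : Fin k, C h i = 0) := by
  let C : Fin s × Fin (mu * Fintype.card H) → Fin k → G × H := fun q i => (B q.1 i, M i q.2)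
  refine ⟨_, C ∘ finProdFinEquiv.symm, fun g => ?_, fun j => ?_⟩
  · change ∑ j, diffCount (C (finProdFinEquiv.symm j)) g = lam * mu
    rw [Equiv.sum_comp finProdFinEquiv.symm (fun q => diffCount (C q) g), Fintype.sum_prod_type]
    simp only [C, sum_diffCount_prod_column _ M hDM, ← sum_mul]
    exact congrArg (· * mu) (hSDF g.1)
  · exact Prod.ext (by simp [C, Prod.fst_sum, hBadd]) (by simp [C, Prod.snd_sum, hMadd])

/-- From an additive `(G,k,λ)` strong difference family and an additive `(H,k,μ)`
difference matrix one obtains an additive `(G × H, k, λμ)` strong difference family. -/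
theorem stmt_16 (G H : Type*) [AddCommGroup G] [Fintype G] [DecidableEq G]
    [AddCommGroup H] [Fintype H] [DecidableEq H]
    (k lam mu : ℕ) (hk : 2 ≤ k) (hlam : 1 ≤ lam) (hmu : 1 ≤ mu)
    (s : ℕ) (B : Fin s → Fin k → G)
    (hSDF : ∀ g : G,
      (∑ h : Fin s, ((Finset.univ : Finset (Fin k × Fin k)).filter
        (fun p => p.1 ≠ p.2 ∧ B h p.1 - B h p.2 = g)).card) = lam)
    (hBadd : ∀ h : Fin s, ∑ i : Fin k, B h i = 0)
    (M : Fin k → Fin (mu * Fintype.card H) → H)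
    (hDM : ∀ r t : Fin k, r ≠ t → ∀ h : H,
      ((Finset.univ : Finset (Fin (mu * Fintype.card H))).filter
        (fun c => M r c - M t c = h)).card = mu)
    (hMadd : ∀ c : Fin (mu * Fintype.card H), ∑ r : Fin k, M r c = 0) :
    ∃ (s' : ℕ) (C : Fin s' → Fin k → G × H),
      (∀ g : G × H,
        (∑ h : Fin s', ((Finset.univ : Finset (Fin k × Fin k)).filter
          (fun p => p.1 ≠ p.2 ∧ C h p.1 - C h p.2 = g)).card) = lam * mu) ∧
      (∀ h : Fin s', ∑ i : Fin k, C h i = 0) :=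
  stmt_16_general G H k lam mu s B hSDF hBadd M hDM hMadd
end

section
/- Let G be a zero-sum finite abelian group of order k admitting an additive (G,k,λ) strong difference family, let p be a prime dividing k, and let q > k be a power of p. Then there exists a (G × F_q)-super-regular 2-(kq, k, λ) design. -/
/-!
Fix an injective `x : Fin k → F` with zero sum. It exists because `p ∣ k < q`: take `k / |S|`
cosets of a zero-sum subgroup `S` of `(F, +)` whose order kills `F`, namely the prime field for odd
`p` and a Klein four-subgroup for `p = 2` (then `4 ∣ k`, since a zero-sum abelian group cannot have
order `2 (mod 4)`).

The design consists of the images of the base blocks `{(B h i, x i)}` under all maps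
`(u, v) ↦ (u + g, c v + y)` with `c ≠ 0`, together with `λ` copies of every layer `G × {y}`.
As the affine group of `F` is sharply 2-transitive, two points with different `F`-coordinates lie
in exactly one developed block for each representation `B h i - B h j` of their `G`-difference,
hence in `λ` blocks; two points in the same layer lie only in the `λ` copies of that layer. Every
block sums to zero because `k` annihilates `G × F`.
-/

open Finset Function

section TwoTorsion

variable {A : Type*} [AddCommGroup A]

theorem ZMod.lift_apply_one (n : ℕ) (f : {f : ℤ →+ A // f n = 0}) :
    ZMod.lift n f 1 = f.1 1 := by
  simpa using ZMod.lift_coe n f 1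

def pairHom (a b : A) (ha : 2 • a = 0) (hb : 2 • b = 0) : ZMod 2 × ZMod 2 →+ A :=
  (ZMod.lift 2 ⟨zmultiplesHom A a, (natCast_zsmul a 2).trans ha⟩).coprod
    (ZMod.lift 2 ⟨zmultiplesHom A b, (natCast_zsmul b 2).trans hb⟩)

theorem pairHom_injective {a b : A} (ha : 2 • a = 0) (hb : 2 • b = 0) (ha0 : a ≠ 0)
    (hb0 : b ≠ 0) (hab : a ≠ b) : Injective (pairHom a b ha hb) := by
  have hab' : a + b ≠ 0 := fun h =>
    hab (by rw [eq_neg_of_add_eq_zero_left h, neg_eq_of_add_eq_zero_left (two_nsmul b ▸ hb)])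
  have hZ : ∀ u : ZMod 2, u = 0 ∨ u = 1 := by decide
  refine (injective_iff_map_eq_zero _).2 fun ⟨u, v⟩ h => ?_
  rcases hZ u with rfl | rfl <;> rcases hZ v with rfl | rfl <;>
    simp_all [pairHom, ZMod.lift_apply_one]

theorem four_dvd_natCard_of_two_nsmul_eq_zero {a b : A} (ha : 2 • a = 0) (hb : 2 • b = 0)
    (ha0 : a ≠ 0) (hb0 : b ≠ 0) (hab : a ≠ b) : 4 ∣ Nat.card A := by
  simpa using AddSubgroup.card_dvd_of_injective _ (pairHom_injective ha hb ha0 hb0 hab)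

variable [Fintype A] [DecidableEq A]

theorem sum_univ_eq_sum_filter_two_nsmul_eq_zero_s19 :
    ∑ a : A, a = ∑ a ∈ univ.filter (fun a : A => 2 • a = 0), a := by
  rw [← sum_filter_add_sum_filter_not univ (fun a : A => 2 • a = 0), add_eq_left]
  refine sum_involution (fun a _ => -a) (fun a _ => add_neg_cancel a) (fun a ha _ hneg => ?_)
    (fun a ha => ?_) (fun a _ => neg_neg a)
  · simp only [mem_filter, mem_univ, true_and] at ha
    exact ha (by rw [two_nsmul]; nth_rw 1 [← hneg]; exact neg_add_cancel a)
  · simpa using ha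

theorem sum_univ_eq_zero_of_odd_card (h : Odd (Fintype.card A)) : ∑ a : A, a = 0 := by
  rw [sum_univ_eq_sum_filter_two_nsmul_eq_zero_s19]
  refine sum_eq_zero fun a ha => ?_
  have h2 : addOrderOf a ∣ 2 := addOrderOf_dvd_of_nsmul_eq_zero (mem_filter.1 ha).2
  rw [← AddMonoid.addOrderOf_eq_one_iff]
  exact Nat.eq_one_of_dvd_coprimes (Nat.coprime_two_left.2 h) h2 addOrderOf_dvd_card

theorem four_dvd_card_of_sum_univ_eq_zero (hsum : ∑ a : A, a = 0) (h2 : 2 ∣ Fintype.card A) :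
    4 ∣ Fintype.card A := by
  by_contra h4
  have : Fact (Nat.Prime 2) := ⟨Nat.prime_two⟩
  obtain ⟨a, ha⟩ := exists_prime_addOrderOf_dvd_card 2 h2
  have ha2 : 2 • a = 0 := ha ▸ addOrderOf_nsmul_eq_zero a
  have ha0 : a ≠ 0 := by rintro rfl; simp at ha
  have htorsion : univ.filter (fun b : A => 2 • b = 0) = {0, a} := by
    ext b
    simp only [mem_filter, mem_univ, true_and, mem_insert, mem_singleton]
    refine ⟨fun hb => ?_, by rintro (rfl | rfl) <;> simp [ha2]⟩
    by_contra! hb'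
    have := four_dvd_natCard_of_two_nsmul_eq_zero ha2 hb ha0 hb'.1 (Ne.symm hb'.2)
    exact h4 (by simpa using this)
  rw [sum_univ_eq_sum_filter_two_nsmul_eq_zero_s19, htorsion, sum_pair ha0.symm, zero_add] at hsum
  exact ha0 hsum

end TwoTorsion

theorem exists_injective_sum_eq_zero_of_addMonoidHom {A S : Type*} [AddCommGroup A] [Fintype A]
    [AddCommGroup S] [Fintype S] (ψ : S →+ A) (hψ : Injective ψ) (hS : ∑ s : S, s = 0)
    (hcard : ∀ a : A, Fintype.card S • a = 0) {k : ℕ} (hdvd : Fintype.card S ∣ k)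
    (hk : k ≤ Fintype.card A) : ∃ x : Fin k → A, Injective x ∧ ∑ i, x i = 0 := by
  obtain ⟨t, rfl⟩ := hdvd
  have := Fintype.ofFinite (A ⧸ ψ.range)
  obtain ⟨e⟩ : Nonempty (Fin t ↪ A ⧸ ψ.range) := by
    refine Function.Embedding.nonempty_of_card_le ?_
    have hA := ψ.range.card_eq_card_quotient_mul_card_addSubgroup
    rw [← Nat.card_congr (AddMonoidHom.ofInjective hψ).toEquiv] at hA
    simp only [Nat.card_eq_fintype_card] at hA
    rw [hA, mul_comm] at hk
    simpa using Nat.le_of_mul_le_mul_right hk Fintype.card_pos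
  let f : Fin t × S → A := fun z => (e z.1).out + ψ z.2
  have hmk : ∀ z, (f z : A ⧸ ψ.range) = e z.1 := fun z => by simp [f]
  have hf : Injective f := fun z z' h => by
    have h1 : z.1 = z'.1 := e.injective (by rw [← hmk, ← hmk, h])
    simp only [f, h1, add_right_inj, hψ.eq_iff] at h
    exact Prod.ext h1 h
  let σ : Fin (Fintype.card S * t) ≃ Fin t × S :=
    (Fintype.equivFinOfCardEq (by simp [mul_comm])).symm
  refine ⟨f ∘ σ, hf.comp σ.injective, ?_⟩
  rw [comp_def, Equiv.sum_comp σ f, Fintype.sum_prod_type]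
  refine sum_eq_zero fun u _ => ?_
  simp only [f, sum_add_distrib, sum_const, card_univ, hcard]
  rw [← map_sum, hS, map_zero, add_zero]

theorem FiniteField.exists_injective_sum_eq_zero {F : Type*} [Field F] [Fintype F] {p k : ℕ}
    [hp : Fact p.Prime] [CharP F p] (hpk : p ∣ k) (h4 : p = 2 → 4 ∣ k)
    (hk : k ≤ Fintype.card F) : ∃ x : Fin k → F, Injective x ∧ ∑ i, x i = 0 := by
  rcases hp.out.eq_two_or_odd' with rfl | hodd
  · obtain rfl | hk0 := k.eq_zero_or_pos
    · exact ⟨finZeroElim, fun i => i.elim0, by simp⟩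
    have hK : ∑ s : ZMod 2 × ZMod 2, s = 0 := rfl
    classical
    have hF : #({0, 1} : Finset F) < #(univ : Finset F) :=
      card_le_two.trans_lt (by have := Nat.le_of_dvd hk0 (h4 rfl); rw [card_univ]; omega)
    obtain ⟨b, -, hb⟩ := exists_mem_notMem_of_card_lt_card hF
    simp only [mem_insert, mem_singleton, not_or] at hb
    have h2 : ∀ c : F, 2 • c = 0 := fun c => by rw [two_nsmul, CharTwo.add_self_eq_zero]
    refine exists_injective_sum_eq_zero_of_addMonoidHom (pairHom 1 b (h2 1) (h2 b))
      (pairHom_injective _ _ one_ne_zero hb.1 (Ne.symm hb.2)) hK (fun c => ?_)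
      (by simpa using h4 rfl) hk
    rw [Fintype.card_prod, ZMod.card, mul_nsmul, h2]
  · have : NeZero p := ⟨hp.out.ne_zero⟩
    refine exists_injective_sum_eq_zero_of_addMonoidHom (ZMod.castHom dvd_rfl F).toAddMonoidHom
      (ZMod.castHom_injective F) (sum_univ_eq_zero_of_odd_card (by rwa [ZMod.card]))
      (fun c => ?_) (by rwa [ZMod.card]) hk
    rw [ZMod.card, nsmul_eq_mul, CharP.cast_eq_zero, zero_mul]

theorem map_map_univ_val_of_equiv {ι α : Type*} [Fintype ι] (f : ι → α) (φ : α → α) (σ : ι ≃ ι)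
    (h : ∀ i, φ (f i) = f (σ i)) : (univ.val.map f).map φ = univ.val.map f := by
  calc (univ.val.map f).map φ = (univ.val.map σ).map f := by
        rw [Multiset.map_map, Multiset.map_map]
        exact Multiset.map_congr rfl fun i _ => h i
    _ = univ.val.map f := by rw [Multiset.map_univ_val_equiv]

section LayerBlock

variable (G : Type*) {F : Type*} [Fintype G]

def layerBlock (y : F) : Finset (G × F) := univ ×ˢ {y}

variable {G}

theorem mem_layerBlock {y : F} {a : G × F} : a ∈ layerBlock G y ↔ a.2 = y := by
  rw [layerBlock, mem_product]
  simp

theorem image_add_layerBlock [AddCommGroup G] [AddCommGroup F] [DecidableEq G] [DecidableEq F]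
    (y : F) (t : G × F) : (layerBlock G y).image (· + t) = layerBlock G (y + t.2) := by
  ext a
  simp only [mem_image, mem_layerBlock]
  constructor
  · rintro ⟨b, rfl, rfl⟩; rfl
  · intro h; exact ⟨a - t, by simp [h], sub_add_cancel a t⟩

theorem card_layerBlock (y : F) : #(layerBlock G y) = Fintype.card G := by
  simp [layerBlock]

theorem sum_layerBlock [AddCommMonoid G] [AddCommMonoid F] (y : F) :
    ∑ a ∈ layerBlock G y, a = (∑ g : G, g, Fintype.card G • y) := by
  ext <;> simp [layerBlock, Prod.fst_sum, Prod.snd_sum]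

end LayerBlock

section Construction

variable {G F : Type*} [AddCommGroup G] [Field F] {s k : ℕ} (B : Fin s → Fin k → G)
  (x : Fin k → F)

def developedPoint (z : Fin s × G × Fˣ × F) (i : Fin k) : G × F :=
  (B z.1 i + z.2.1, z.2.2.1 * x i + z.2.2.2)

variable {B x}

theorem developedPoint_snd_injective (hx : Injective x) (z : Fin s × G × Fˣ × F) :
    Injective fun i => (developedPoint B x z i).2 :=
  fun _ _ h => hx <| mul_left_cancel₀ z.2.2.1.ne_zero <| add_right_cancel h

theorem developedPoint_injective (hx : Injective x) (z : Fin s × G × Fˣ × F) :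
    Injective (developedPoint B x z) :=
  (developedPoint_snd_injective hx z).of_comp

theorem eq_of_developedPoint_eq (hx : Injective x) {z z' : Fin s × G × Fˣ × F} (h : z.1 = z'.1)
    {i j : Fin k} (hij : i ≠ j) (hi : developedPoint B x z i = developedPoint B x z' i)
    (hj : developedPoint B x z j = developedPoint B x z' j) : z = z' := by
  obtain ⟨h, g, c, y⟩ := z
  obtain ⟨h', g', c', y'⟩ := z'
  simp only [developedPoint, Prod.mk.injEq] at h hi hj
  subst h
  have hc : c = c' := by
    have : ((c : F) - c') * (x i - x j) = 0 := by linear_combination hi.2 - hj.2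
    exact Units.ext <| sub_eq_zero.1 <|
      (mul_eq_zero.1 this).resolve_right (sub_ne_zero.2 (hx.ne hij))
  subst hc
  simp_all

theorem exists_developedPoint_eq (hx : Injective x) {a b : G × F} (hab : a.2 ≠ b.2) {h : Fin s}
    {i j : Fin k} (hij : i ≠ j) (hB : B h i - B h j = a.1 - b.1) :
    ∃ z : Fin s × G × Fˣ × F,
      z.1 = h ∧ developedPoint B x z i = a ∧ developedPoint B x z j = b := by
  have hx' : x i - x j ≠ 0 := sub_ne_zero.2 (hx.ne hij)
  let c : Fˣ := Units.mk0 ((a.2 - b.2) / (x i - x j)) (div_ne_zero (sub_ne_zero.2 hab) hx')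
  refine ⟨(h, a.1 - B h i, c, a.2 - c * x i), rfl, ?_, ?_⟩ <;> ext
  · simp [developedPoint]
  · simp [developedPoint]
  · simp only [developedPoint]
    rw [show B h j = B h i - (a.1 - b.1) by rw [← hB]; abel]
    abel
  · simp [developedPoint, c]
    field_simp
    ring

variable [DecidableEq G] [DecidableEq F]

variable (B x) in
def developedBlock (z : Fin s × G × Fˣ × F) : Finset (G × F) :=
  univ.image (developedPoint B x z)

theorem mem_developedBlock {z : Fin s × G × Fˣ × F} {a : G × F} :
    a ∈ developedBlock B x z ↔ ∃ i, developedPoint B x z i = a := by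
  simp [developedBlock]

theorem image_add_developedBlock (z : Fin s × G × Fˣ × F) (t : G × F) :
    (developedBlock B x z).image (· + t) =
      developedBlock B x (z.1, z.2.1 + t.1, z.2.2.1, z.2.2.2 + t.2) := by
  simp only [developedBlock, image_image]
  congr 1
  funext i
  ext <;> simp [developedPoint, add_assoc]

theorem card_developedBlock (hx : Injective x) (z : Fin s × G × Fˣ × F) :
    #(developedBlock B x z) = k := by
  rw [developedBlock, card_image_of_injective _ (developedPoint_injective hx z), card_univ,
    Fintype.card_fin]

theorem sum_developedBlock (hx : Injective x) (z : Fin s × G × Fˣ × F) :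
    ∑ a ∈ developedBlock B x z, a =
      (∑ i, B z.1 i, z.2.2.1 * ∑ i, x i) + k • (z.2.1, z.2.2.2) := by
  rw [developedBlock, sum_image fun i _ j _ h => developedPoint_injective hx z h]
  ext <;> simp [developedPoint, Prod.fst_sum, Prod.snd_sum, sum_add_distrib, mul_sum]

variable [Fintype G] [Fintype F]

variable (B x) in
def liftedDesign (lam : ℕ) : Multiset (Finset (G × F)) :=
  univ.val.map (developedBlock B x) + lam • univ.val.map (layerBlock G)

theorem map_image_add_liftedDesign (lam : ℕ) (t : G × F) :
    (liftedDesign B x lam).map (·.image (· + t)) = liftedDesign B x lam := by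
  let σ : Fin s × G × Fˣ × F ≃ Fin s × G × Fˣ × F :=
    (Equiv.refl _).prodCongr <|
      (Equiv.addRight t.1).prodCongr <| (Equiv.refl _).prodCongr (Equiv.addRight t.2)
  rw [liftedDesign, Multiset.map_add, Multiset.map_nsmul,
    map_map_univ_val_of_equiv _ _ σ (image_add_developedBlock · t),
    map_map_univ_val_of_equiv _ _ (Equiv.addRight t.2) (image_add_layerBlock · t)]

theorem card_eq_and_sum_eq_zero_of_mem_liftedDesign (hx : Injective x) (hxsum : ∑ i, x i = 0)
    (hB : ∀ h, ∑ i, B h i = 0) (hG : ∑ g : G, g = 0) (hkG : Fintype.card G = k)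
    (hkF : (k : F) = 0) {lam : ℕ} {Bl : Finset (G × F)} (hBl : Bl ∈ liftedDesign B x lam) :
    #Bl = k ∧ ∑ a ∈ Bl, a = 0 := by
  have hkF' (y : F) : k • y = 0 := by rw [nsmul_eq_mul, hkF, zero_mul]
  rcases Multiset.mem_add.1 hBl with hBl | hBl
  · obtain ⟨z, -, rfl⟩ := Multiset.mem_map.1 hBl
    refine ⟨card_developedBlock hx z, ?_⟩
    rw [sum_developedBlock hx, hB, hxsum, mul_zero, Prod.smul_mk, hkF', ← hkG, card_nsmul_eq_zero,
      Prod.mk_zero_zero, add_zero]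
  · obtain ⟨y, -, rfl⟩ := Multiset.mem_map.1 (Multiset.mem_of_mem_nsmul hBl)
    rw [card_layerBlock, sum_layerBlock, hG, hkG, hkF']
    exact ⟨rfl, rfl⟩

theorem card_filter_mem_developedBlock_of_snd_eq (hx : Injective x) {a b : G × F} (hab : a ≠ b)
    (h : a.2 = b.2) : #{z | a ∈ developedBlock B x z ∧ b ∈ developedBlock B x z} = 0 := by
  refine card_eq_zero.2 (filter_eq_empty_iff.2 fun z _ ⟨ha, hb⟩ => ?_)
  obtain ⟨i, rfl⟩ := mem_developedBlock.1 ha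
  obtain ⟨j, rfl⟩ := mem_developedBlock.1 hb
  exact hab (congrArg _ (developedPoint_snd_injective hx z h))

theorem card_filter_mem_developedBlock_of_snd_ne (hx : Injective x) {a b : G × F}
    (hab : a.2 ≠ b.2) :
    #{z | a ∈ developedBlock B x z ∧ b ∈ developedBlock B x z} =
      #{w : Fin s × Fin k × Fin k | w.2.1 ≠ w.2.2 ∧ B w.1 w.2.1 - B w.1 w.2.2 = a.1 - b.1} := by
  have hz (w : Fin s × Fin k × Fin k)
      (hw : w.2.1 ≠ w.2.2 ∧ B w.1 w.2.1 - B w.1 w.2.2 = a.1 - b.1) :=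
    exists_developedPoint_eq (x := x) hx hab hw.1 hw.2
  symm
  refine card_bij (fun w hw => (hz w (mem_filter.1 hw).2).choose) (fun w hw => ?_)
    (fun w hw w' hw' h => ?_) ?_
  · obtain ⟨-, ha, hb⟩ := (hz w (mem_filter.1 hw).2).choose_spec
    exact mem_filter.2 ⟨mem_univ _, mem_developedBlock.2 ⟨_, ha⟩, mem_developedBlock.2 ⟨_, hb⟩⟩
  · obtain ⟨h1, ha, hb⟩ := (hz w (mem_filter.1 hw).2).choose_spec
    obtain ⟨h1', ha', hb'⟩ := (hz w' (mem_filter.1 hw').2).choose_spec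
    rw [h] at h1 ha hb
    exact Prod.ext (h1.symm.trans h1') <| Prod.ext
      (developedPoint_injective hx _ (ha.trans ha'.symm))
      (developedPoint_injective hx _ (hb.trans hb'.symm))
  · intro z hz'
    obtain ⟨-, ha, hb⟩ := mem_filter.1 hz'
    obtain ⟨i, rfl⟩ := mem_developedBlock.1 ha
    obtain ⟨j, rfl⟩ := mem_developedBlock.1 hb
    have hij : i ≠ j := by rintro rfl; exact hab rfl
    have hw : i ≠ j ∧
        B z.1 i - B z.1 j = (developedPoint B x z i).1 - (developedPoint B x z j).1 :=
      ⟨hij, by simp only [developedPoint]; abel⟩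
    obtain ⟨h1, hi, hj⟩ := (hz (z.1, i, j) hw).choose_spec
    exact ⟨_, mem_filter.2 ⟨mem_univ _, hw⟩, eq_of_developedPoint_eq hx h1 hij hi hj⟩

theorem countP_liftedDesign (hx : Injective x) {lam : ℕ}
    (hB : ∀ g : G, ∑ h : Fin s, #{p : Fin k × Fin k | p.1 ≠ p.2 ∧ B h p.1 - B h p.2 = g} = lam)
    {a b : G × F} (hab : a ≠ b) :
    (liftedDesign B x lam).countP (fun Bl => a ∈ Bl ∧ b ∈ Bl) = lam := by
  rw [liftedDesign, Multiset.countP_add, Multiset.countP_nsmul, Multiset.countP_map,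
    Multiset.countP_map, ← filter_val, ← filter_val, ← card_def, ← card_def]
  rcases eq_or_ne a.2 b.2 with h | h
  · rw [card_filter_mem_developedBlock_of_snd_eq hx hab h]
    simp [mem_layerBlock, h, filter_eq]
  · rw [card_filter_mem_developedBlock_of_snd_ne hx h, ← hB (a.1 - b.1)]
    have : #{y | a ∈ layerBlock G y ∧ b ∈ layerBlock G y} = 0 :=
      card_eq_zero.2 (filter_eq_empty_iff.2 fun y _ ⟨ha, hb⟩ =>
        h ((mem_layerBlock.1 ha).trans (mem_layerBlock.1 hb).symm))
    rw [this, mul_zero, add_zero, card_filter, Fintype.sum_prod_type]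
    simp_rw [card_filter]

end Construction

theorem stmt_19_general (k lam : ℕ)
    (G : Type) [AddCommGroup G] [Fintype G] [DecidableEq G]
    (hGcard : Fintype.card G = k) (hGzs : ∑ g : G, g = 0)
    (s : ℕ) (B : Fin s → Fin k → G)
    (hSDF : ∀ g : G,
      (∑ h : Fin s, ((Finset.univ : Finset (Fin k × Fin k)).filter
        (fun p => p.1 ≠ p.2 ∧ B h p.1 - B h p.2 = g)).card) = lam)
    (hadd : ∀ h : Fin s, ∑ i : Fin k, B h i = 0)
    (p : ℕ) (hp : p.Prime) (hpk : p ∣ k)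
    (q : ℕ) (hq : ∃ m : ℕ, 1 ≤ m ∧ q = p ^ m) (hqk : k < q)
    (F : Type) [Field F] [Fintype F] [DecidableEq F] (hF : Fintype.card F = q) :
    ∃ 𝓑 : Multiset (Finset (G × F)),
      (∀ Bl ∈ 𝓑, Bl.card = k ∧ ∑ x ∈ Bl, x = 0) ∧
      (∀ x y : G × F, x ≠ y → 𝓑.countP (fun Bl => x ∈ Bl ∧ y ∈ Bl) = lam) ∧
      (∀ g : G × F, 𝓑.map (fun Bl => Bl.image (· + g)) = 𝓑) := by
  obtain ⟨m, -, rfl⟩ := hq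
  have : Fact p.Prime := ⟨hp⟩
  have : CharP F p := charP_of_card_eq_prime_pow hF
  have h4 : p = 2 → 4 ∣ k := by
    rintro rfl
    exact hGcard ▸ four_dvd_card_of_sum_univ_eq_zero hGzs (hGcard ▸ hpk)
  obtain ⟨x, hx, hxsum⟩ := FiniteField.exists_injective_sum_eq_zero hpk h4 (hF ▸ hqk.le)
  have hkF : (k : F) = 0 := (CharP.cast_eq_zero_iff F p k).2 hpk
  exact ⟨liftedDesign B x lam,
    fun _ => card_eq_and_sum_eq_zero_of_mem_liftedDesign hx hxsum hadd hGzs hGcard hkF,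
    fun _ _ => countP_liftedDesign hx hSDF, map_image_add_liftedDesign lam⟩

/-- If `G` is a zero-sum abelian group of order `k` admitting an additive `(G,k,λ)`
strong difference family, `p` is a prime dividing `k`, and `q > k` is a power of `p`,
then there exists a `(G × F_q)`-super-regular 2-(kq, k, λ) design (blocks counted with
multiplicity). -/
theorem stmt_19 (k lam : ℕ) (hlam : 1 ≤ lam)
    (G : Type) [AddCommGroup G] [Fintype G] [DecidableEq G]
    (hGcard : Fintype.card G = k) (hGzs : ∑ g : G, g = 0)
    (s : ℕ) (B : Fin s → Fin k → G)
    (hSDF : ∀ g : G,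
      (∑ h : Fin s, ((Finset.univ : Finset (Fin k × Fin k)).filter
        (fun p => p.1 ≠ p.2 ∧ B h p.1 - B h p.2 = g)).card) = lam)
    (hadd : ∀ h : Fin s, ∑ i : Fin k, B h i = 0)
    (p : ℕ) (hp : p.Prime) (hpk : p ∣ k)
    (q : ℕ) (hq : ∃ m : ℕ, 1 ≤ m ∧ q = p ^ m) (hqk : k < q)
    (F : Type) [Field F] [Fintype F] [DecidableEq F] (hF : Fintype.card F = q) :
    ∃ 𝓑 : Multiset (Finset (G × F)),
      (∀ Bl ∈ 𝓑, Bl.card = k ∧ ∑ x ∈ Bl, x = 0) ∧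
      (∀ x y : G × F, x ≠ y → 𝓑.countP (fun Bl => x ∈ Bl ∧ y ∈ Bl) = lam) ∧
      (∀ g : G × F, 𝓑.map (fun Bl => Bl.image (· + g)) = 𝓑) :=
  stmt_19_general k lam G hGcard hGzs s B hSDF hadd p hp hpk q hq hqk F hF
end
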